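/- arXiv:2404.07707 — 12 statements merged into one kernel-verified Lean document; each statement's English description precedes it below -/
import Mathlib

section
/- For every chores instance with n ≥ 1 agents there exists an integral allocation X = (X_1, …, X_n) whose total subsidy is at most (n−1)/2, i.e., ∑_{i∈N} max(c_i(X_i) − w_i·c_i(M), 0) ≤ (n−1)/2. -/
open Finset

/-- One cancellation step: given a direction `d` supported on the support of `x`
which preserves column sums and does not increase any agent's cost, we can move
to a feasible point with strictly smaller support. -/
lemma chores_step {N M : Type*} [Fintype N] [Fintype M]
    (w : N → ℝ) (c : N → M → ℝ)
    (x : N → M → ℝ) (hx0 : ∀ i e, 0 ≤ x i e) (hcol : ∀ e, ∑ i, x i e = 1)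
    (hcost : ∀ i, ∑ e, x i e * c i e ≤ w i * ∑ e, c i e)
    (d : N → M → ℝ)
    (hdsupp : ∀ i e, x i e = 0 → d i e = 0)
    (hdne : ∃ p : N × M, d p.1 p.2 ≠ 0)
    (hcold : ∀ e, ∑ i, d i e = 0)
    (hrow : ∀ j, ∑ e, d j e * c j e ≤ 0) :
    ∃ y : N → M → ℝ, (∀ i e, 0 ≤ y i e) ∧ (∀ e, ∑ i, y i e = 1) ∧
      (∀ i, ∑ e, y i e * c i e ≤ w i * ∑ e, c i e) ∧
      (univ.filter fun p : N × M => y p.1 p.2 ≠ 0).card <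
        (univ.filter fun p : N × M => x p.1 p.2 ≠ 0).card := by
  obtain ⟨p₀, hp₀⟩ := hdne
  have hNeg : (univ.filter fun p : N × M => d p.1 p.2 < 0).Nonempty := by
    by_contra h
    rw [not_nonempty_iff_eq_empty, filter_eq_empty_iff] at h
    have hnn : ∀ i, 0 ≤ d i p₀.2 := fun i => le_of_not_gt (h (mem_univ (i, p₀.2)))
    have hz := (Finset.sum_eq_zero_iff_of_nonneg (fun i _ => hnn i)).mp (hcold p₀.2)
      p₀.1 (mem_univ _)
    exact hp₀ hz
  have hxpos : ∀ p ∈ univ.filter fun p : N × M => d p.1 p.2 < 0, 0 < x p.1 p.2 := by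
    intro p hp
    rw [mem_filter] at hp
    have hdnz : d p.1 p.2 ≠ 0 := ne_of_lt hp.2
    have hxnz : x p.1 p.2 ≠ 0 := fun h => hdnz (hdsupp _ _ h)
    exact lt_of_le_of_ne (hx0 _ _) (Ne.symm hxnz)
  set t := (univ.filter fun p : N × M => d p.1 p.2 < 0).inf' hNeg
    (fun p => x p.1 p.2 / (-(d p.1 p.2))) with ht
  have htpos : 0 < t := by
    rw [ht, Finset.lt_inf'_iff]
    intro p hp
    have hd : d p.1 p.2 < 0 := (mem_filter.mp hp).2
    exact div_pos (hxpos p hp) (by linarith)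
  have hstep : ∀ p ∈ univ.filter fun p : N × M => d p.1 p.2 < 0,
      t ≤ x p.1 p.2 / (-(d p.1 p.2)) := fun p hp => Finset.inf'_le _ hp
  have hy0 : ∀ i e, 0 ≤ x i e + t * d i e := by
    intro i e
    rcases lt_or_ge (d i e) 0 with hd | hd
    · have hmem : ((i, e) : N × M) ∈ univ.filter fun p : N × M => d p.1 p.2 < 0 := by
        rw [mem_filter]; exact ⟨mem_univ _, hd⟩
      have h1 := hstep _ hmem
      have h2 : (0:ℝ) < -(d i e) := by linarith
      rw [le_div_iff₀ h2] at h1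
      nlinarith
    · nlinarith [hx0 i e, mul_nonneg htpos.le hd]
  refine ⟨fun i e => x i e + t * d i e, hy0, ?_, ?_, ?_⟩
  · intro e
    rw [Finset.sum_add_distrib, hcol, ← Finset.mul_sum, hcold, mul_zero, add_zero]
  · intro i
    have hexp : ∑ e, (x i e + t * d i e) * c i e
        = (∑ e, x i e * c i e) + t * ∑ e, d i e * c i e := by
      rw [Finset.mul_sum, ← Finset.sum_add_distrib]
      exact Finset.sum_congr rfl fun e _ => by ring
    rw [hexp]
    nlinarith [hcost i, mul_nonneg htpos.le (neg_nonneg.mpr (hrow i))]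
  · have hsub : (univ.filter fun p : N × M => x p.1 p.2 + t * d p.1 p.2 ≠ 0)
        ⊆ univ.filter fun p : N × M => x p.1 p.2 ≠ 0 := by
      intro p hp
      rw [mem_filter] at hp ⊢
      refine ⟨mem_univ _, fun hxz => ?_⟩
      apply hp.2
      rw [hxz, hdsupp _ _ hxz, mul_zero, add_zero]
    obtain ⟨q, hqNeg, hq⟩ := Finset.exists_mem_eq_inf' hNeg
      (fun p : N × M => x p.1 p.2 / (-(d p.1 p.2)))
    have hdq : d q.1 q.2 < 0 := (mem_filter.mp hqNeg).2
    have hdqne : d q.1 q.2 ≠ 0 := ne_of_lt hdq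
    have hyq : x q.1 q.2 + t * d q.1 q.2 = 0 := by
      rw [← ht] at hq
      have hnum : x q.1 q.2 / -d q.1 q.2 * d q.1 q.2 = -x q.1 q.2 := by
        rw [div_neg, neg_mul, div_mul_cancel₀ _ hdqne]
      rw [hq, hnum]
      ring
    apply Finset.card_lt_card
    rw [Finset.ssubset_iff_of_subset hsub]
    refine ⟨q, ?_, ?_⟩
    · rw [mem_filter]; exact ⟨mem_univ _, ne_of_gt (hxpos q hqNeg)⟩
    · rw [mem_filter]
      push_neg
      intro _
      exact hyq
  
/-- If the support is at least `n + m`, we can find a cancellation direction and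
strictly reduce the support while keeping feasibility. -/
lemma chores_reduce {N M : Type*} [Fintype N] [Fintype M] [DecidableEq N]
    [DecidableEq M]
    (w : N → ℝ) (c : N → M → ℝ) (i₀ : N)
    (x : N → M → ℝ) (hx0 : ∀ i e, 0 ≤ x i e) (hcol : ∀ e, ∑ i, x i e = 1)
    (hcost : ∀ i, ∑ e, x i e * c i e ≤ w i * ∑ e, c i e)
    (hbig : Fintype.card N + Fintype.card M
      ≤ (univ.filter fun p : N × M => x p.1 p.2 ≠ 0).card) :
    ∃ y : N → M → ℝ, (∀ i e, 0 ≤ y i e) ∧ (∀ e, ∑ i, y i e = 1) ∧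
      (∀ i, ∑ e, y i e * c i e ≤ w i * ∑ e, c i e) ∧
      (univ.filter fun p : N × M => y p.1 p.2 ≠ 0).card <
        (univ.filter fun p : N × M => x p.1 p.2 ≠ 0).card := by
  classical
  have hcardN : 1 ≤ Fintype.card N := Fintype.card_pos_iff.mpr ⟨i₀⟩
  set S := univ.filter fun p : N × M => x p.1 p.2 ≠ 0 with hS
  set v : {p // p ∈ S} → (M → ℝ) × ({j : N // j ≠ i₀} → ℝ) :=
    fun p => (Pi.single ((p : N × M).2) (1:ℝ),
      fun j => if (p : N × M).1 = (j : N) then c (p : N × M).1 (p : N × M).2 else 0) with hv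
  have hfr : Module.finrank ℝ ((M → ℝ) × ({j : N // j ≠ i₀} → ℝ))
      = Fintype.card M + (Fintype.card N - 1) := by
    rw [Module.finrank_prod, Module.finrank_pi, Module.finrank_pi]
    congr 1
    simp [Fintype.card_subtype_compl]
  have hni : ¬ LinearIndependent ℝ v := by
    intro h
    have h2 := h.fintype_card_le_finrank
    rw [hfr, Fintype.card_coe] at h2
    omega
  obtain ⟨g, hgsum, p₁, hp₁⟩ := Fintype.not_linearIndependent_iff.mp hni
  set d : N → M → ℝ := fun i e => if h : (i, e) ∈ S then g ⟨(i, e), h⟩ else 0 with hd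
  have hdg : ∀ p : {p // p ∈ S}, d (p : N × M).1 (p : N × M).2 = g p := by
    intro p
    simp only [hd]
    exact dif_pos p.2
  have hdsupp : ∀ i e, x i e = 0 → d i e = 0 := by
    intro i e hxe
    have hmem : ((i, e) : N × M) ∉ S := by
      rw [hS, mem_filter]
      push_neg
      intro _
      exact hxe
    simp only [hd]
    exact dif_neg hmem
  have hsum_sub : ∀ f : N × M → ℝ, (∀ p, p ∉ S → f p = 0) →
      ∑ p : {p // p ∈ S}, f (p : N × M) = ∑ i, ∑ e, f (i, e) := by
    intro f hf
    rw [Finset.sum_coe_sort S f,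
      Finset.sum_subset (Finset.subset_univ S) (fun p _ hp => hf p hp)]
    exact Fintype.sum_prod_type f
  have hcold : ∀ e, ∑ i, d i e = 0 := by
    intro e
    have h1 : (∑ p : {p // p ∈ S}, g p • v p).1 e
        = (0 : (M → ℝ) × ({j : N // j ≠ i₀} → ℝ)).1 e := by rw [hgsum]
    rw [Prod.fst_sum, Finset.sum_apply, Prod.fst_zero, Pi.zero_apply] at h1
    have h1' : ∑ p : {p // p ∈ S},
        (if e = (p : N × M).2 then d (p : N × M).1 (p : N × M).2 else 0) = 0 := by
      have hterm : ∀ p : {p // p ∈ S}, (g p • v p).1 e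
          = if e = (p : N × M).2 then d (p : N × M).1 (p : N × M).2 else 0 := by
        intro p
        rw [hv, hdg p]
        simp only [Prod.smul_fst, Pi.smul_apply, smul_eq_mul, Pi.single_apply, mul_ite,
          mul_one, mul_zero]
      calc ∑ p : {p // p ∈ S},
            (if e = (p : N × M).2 then d (p : N × M).1 (p : N × M).2 else 0)
          = ∑ p : {p // p ∈ S}, (g p • v p).1 e :=
            Finset.sum_congr rfl fun p _ => (hterm p).symm
        _ = 0 := h1
    have hvanish : ∀ p : N × M, p ∉ S → (if e = p.2 then d p.1 p.2 else 0) = 0 := by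
      intro p hp
      have hz : d p.1 p.2 = 0 := by
        simp only [hd]
        exact dif_neg hp
      simp [hz]
    have h2 := hsum_sub (fun p => if e = p.2 then d p.1 p.2 else 0) hvanish
    have h3 : ∀ i : N, (∑ e', if e = e' then d i e' else 0) = d i e := by
      intro i
      rw [Finset.sum_ite_eq univ e (fun e' => d i e')]
      simp
    have h2' : (∑ p : {p // p ∈ S},
        if e = (p : N × M).2 then d (p : N × M).1 (p : N × M).2 else 0)
        = ∑ i, ∑ e', if e = e' then d i e' else 0 := h2
    calc ∑ i, d i e = ∑ i, ∑ e', if e = e' then d i e' else 0 :=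
          Finset.sum_congr rfl fun i _ => (h3 i).symm
      _ = 0 := by rw [← h2', h1']
  have hrowd : ∀ j, j ≠ i₀ → ∑ e, d j e * c j e = 0 := by
    intro j hj
    have h1 : (∑ p : {p // p ∈ S}, g p • v p).2 ⟨j, hj⟩
        = (0 : (M → ℝ) × ({j : N // j ≠ i₀} → ℝ)).2 ⟨j, hj⟩ := by rw [hgsum]
    rw [Prod.snd_sum, Finset.sum_apply, Prod.snd_zero, Pi.zero_apply] at h1
    have h1' : ∑ p : {p // p ∈ S},
        (if (p : N × M).1 = j then d (p : N × M).1 (p : N × M).2 * c (p : N × M).1 (p : N × M).2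
          else 0) = 0 := by
      have hterm : ∀ p : {p // p ∈ S}, (g p • v p).2 ⟨j, hj⟩
          = if (p : N × M).1 = j then d (p : N × M).1 (p : N × M).2 * c (p : N × M).1 (p : N × M).2
            else 0 := by
        intro p
        rw [hv, hdg p]
        simp only [Prod.smul_snd, Pi.smul_apply, smul_eq_mul, mul_ite, mul_zero]
      calc ∑ p : {p // p ∈ S},
            (if (p : N × M).1 = j then
              d (p : N × M).1 (p : N × M).2 * c (p : N × M).1 (p : N × M).2 else 0)
          = ∑ p : {p // p ∈ S}, (g p • v p).2 ⟨j, hj⟩ :=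
            Finset.sum_congr rfl fun p _ => (hterm p).symm
        _ = 0 := h1
    have hvanish : ∀ p : N × M, p ∉ S →
        (if p.1 = j then d p.1 p.2 * c p.1 p.2 else 0) = 0 := by
      intro p hp
      have hz : d p.1 p.2 = 0 := by
        simp only [hd]
        exact dif_neg hp
      simp [hz]
    have h2 := hsum_sub (fun p => if p.1 = j then d p.1 p.2 * c p.1 p.2 else 0) hvanish
    have h3 : ∀ i : N, (∑ e, if i = j then d i e * c i e else 0)
        = if i = j then ∑ e, d j e * c j e else 0 := by
      intro i
      by_cases hij : i = j
      · subst hij; simp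
      · simp [hij]
    have h4 : ∑ i, ∑ e, (if i = j then d i e * c i e else 0) = ∑ e, d j e * c j e := by
      rw [Finset.sum_congr rfl fun i _ => h3 i,
        Finset.sum_ite_eq' univ j (fun _ => ∑ e, d j e * c j e)]
      simp
    have h2' : (∑ p : {p // p ∈ S},
        if (p : N × M).1 = j then d (p : N × M).1 (p : N × M).2 * c (p : N × M).1 (p : N × M).2
          else 0)
        = ∑ i, ∑ e, if i = j then d i e * c i e else 0 := h2
    rw [← h4, ← h2', h1']
  have hdnz : d p₁.1.1 p₁.1.2 ≠ 0 := by
    rw [hdg p₁]; exact hp₁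
  rcases le_or_gt (∑ e, d i₀ e * c i₀ e) 0 with hneg | hpos
  · refine chores_step w c x hx0 hcol hcost d hdsupp ⟨p₁.1, hdnz⟩ hcold ?_
    intro j
    rcases eq_or_ne j i₀ with rfl | hj
    · exact hneg
    · rw [hrowd j hj]
  · refine chores_step w c x hx0 hcol hcost (fun i e => -(d i e))
      (fun i e hxe => by show -d i e = 0; rw [hdsupp i e hxe, neg_zero])
      ⟨p₁.1, by simpa using hdnz⟩
      (fun e => by rw [Finset.sum_neg_distrib, hcold e, neg_zero]) ?_
    intro j
    have hexp : ∑ e, -(d j e) * c j e = -(∑ e, d j e * c j e) := by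
      rw [← Finset.sum_neg_distrib]
      exact Finset.sum_congr rfl fun e _ => by ring
    rw [hexp]
    rcases eq_or_ne j i₀ with rfl | hj
    · linarith
    · rw [hrowd j hj]; simp

/-- There is a fractional allocation with column sums `1`, per-agent cost at most
the proportional share, and support of size at most `n + m - 1`. -/
lemma chores_frac {N M : Type*} [Fintype N] [Fintype M] [DecidableEq N]
    [DecidableEq M] (i₀ : N)
    (w : N → ℝ) (c : N → M → ℝ) (hwpos : ∀ i, 0 < w i) (hwsum : ∑ i, w i = 1) :
    ∃ x : N → M → ℝ, (∀ i e, 0 ≤ x i e) ∧ (∀ e, ∑ i, x i e = 1) ∧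
      (∀ i, ∑ e, x i e * c i e ≤ w i * ∑ e, c i e) ∧
      (univ.filter fun p : N × M => x p.1 p.2 ≠ 0).card + 1
        ≤ Fintype.card N + Fintype.card M := by
  have main : ∀ k (x : N → M → ℝ), (∀ i e, 0 ≤ x i e) → (∀ e, ∑ i, x i e = 1) →
      (∀ i, ∑ e, x i e * c i e ≤ w i * ∑ e, c i e) →
      (univ.filter fun p : N × M => x p.1 p.2 ≠ 0).card ≤ k →
      ∃ x : N → M → ℝ, (∀ i e, 0 ≤ x i e) ∧ (∀ e, ∑ i, x i e = 1) ∧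
        (∀ i, ∑ e, x i e * c i e ≤ w i * ∑ e, c i e) ∧
        (univ.filter fun p : N × M => x p.1 p.2 ≠ 0).card + 1
          ≤ Fintype.card N + Fintype.card M := by
    intro k
    induction k using Nat.strong_induction_on with
    | _ k ih =>
      intro x h0 h1 h2 hk
      by_cases hsmall : (univ.filter fun p : N × M => x p.1 p.2 ≠ 0).card + 1
          ≤ Fintype.card N + Fintype.card M
      · exact ⟨x, h0, h1, h2, hsmall⟩
      · obtain ⟨y, hy0, hy1, hy2, hylt⟩ := chores_reduce w c i₀ x h0 h1 h2 (by omega)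
        exact ih _ (lt_of_lt_of_le hylt hk) y hy0 hy1 hy2 le_rfl
  refine main _ (fun i _ => w i) (fun i _ => (hwpos i).le) (fun _ => hwsum) ?_ le_rfl
  intro i
  rw [← Finset.mul_sum]

/-- For every chores instance with `n ≥ 1` agents there exists an integral allocation
whose total subsidy is at most `(n-1)/2`. -/
theorem chores_total_subsidy_le_n_sub_one_div_two
    {N M : Type*} [Fintype N] [Fintype M] [DecidableEq N]
    (hn : 1 ≤ Fintype.card N)
    (w : N → ℝ) (c : N → M → ℝ)
    (hwpos : ∀ i, 0 < w i) (hwsum : ∑ i, w i = 1)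
    (hc0 : ∀ i e, 0 ≤ c i e) (hc1 : ∀ i e, c i e ≤ 1) :
    ∃ X : M → N,
      ∑ i, max ((∑ e, if X e = i then c i e else 0) - w i * ∑ e, c i e) 0
        ≤ ((Fintype.card N : ℝ) - 1) / 2 := by
  classical
  obtain ⟨i₀⟩ := Fintype.card_pos_iff.mp hn
  obtain ⟨x, hx0, hxcol, hxcost, hxcard⟩ := chores_frac i₀ w c hwpos hwsum
  have hx1 : ∀ i e, x i e ≤ 1 := by
    intro i e
    calc x i e ≤ ∑ j, x j e :=
          Finset.single_le_sum (fun j _ => hx0 j e) (mem_univ i)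
      _ = 1 := hxcol e
  have hcolsum : ∀ e, ∑ i ∈ univ.filter fun i => x i e ≠ 0, x i e = 1 := by
    intro e
    rw [Finset.sum_filter_ne_zero]
    exact hxcol e
  have hcolne : ∀ e, (univ.filter fun i => x i e ≠ 0).Nonempty := by
    intro e
    have hne : ∑ i, x i e ≠ 0 := by rw [hxcol e]; norm_num
    obtain ⟨i, _, hi⟩ := Finset.exists_ne_zero_of_sum_ne_zero hne
    exact ⟨i, by rw [mem_filter]; exact ⟨mem_univ _, hi⟩⟩
  choose X hXmem hXle using fun e =>
    Finset.exists_max_image (univ.filter fun i => x i e ≠ 0) (fun i => x i e) (hcolne e)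
  have hkey : ∀ e, 1 ≤ ((univ.filter fun i => x i e ≠ 0).card : ℝ) * x (X e) e := by
    intro e
    have h1 := Finset.sum_le_card_nsmul (univ.filter fun i => x i e ≠ 0)
      (fun i => x i e) (x (X e) e) (fun i hi => hXle e i hi)
    rw [hcolsum e, nsmul_eq_mul] at h1
    exact h1
  have hitem : ∀ e, 1 - x (X e) e
      ≤ (((univ.filter fun i => x i e ≠ 0).card : ℝ) - 1) / 2 := by
    intro e
    have hD1 : 1 ≤ (univ.filter fun i => x i e ≠ 0).card :=
      Finset.card_pos.mpr (hcolne e)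
    have hk := hkey e
    have hxu := hx1 (X e) e
    rcases eq_or_lt_of_le hD1 with h1 | h2
    · rw [← h1] at hk ⊢
      push_cast at hk ⊢
      linarith
    · have h2' : (2 : ℝ) ≤ ((univ.filter fun i => x i e ≠ 0).card : ℝ) := by
        exact_mod_cast h2
      nlinarith [hx0 (X e) e]
  have hagent : ∀ i, max ((∑ e, if X e = i then c i e else 0) - w i * ∑ e, c i e) 0
      ≤ ∑ e ∈ univ.filter fun e => X e = i, (1 - x i e) := by
    intro i
    have hRnn : 0 ≤ ∑ e ∈ univ.filter fun e => X e = i, (1 - x i e) :=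
      Finset.sum_nonneg fun e _ => by linarith [hx1 i e]
    refine max_le ?_ hRnn
    have h1 : (∑ e, if X e = i then c i e else 0)
        = ∑ e ∈ univ.filter fun e => X e = i, c i e := (Finset.sum_filter _ _).symm
    have hsplit : ∑ e, x i e * c i e
        = (∑ e ∈ univ.filter fun e => X e = i, x i e * c i e)
          + ∑ e ∈ univ.filter fun e => ¬ X e = i, x i e * c i e :=
      (Finset.sum_filter_add_sum_filter_not _ _ _).symm
    have hterm : ∀ e ∈ univ.filter fun e => X e = i,
        c i e - x i e * c i e ≤ 1 - x i e := by
      intro e _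
      nlinarith [hc0 i e, hc1 i e, hx0 i e, hx1 i e]
    have hsum := Finset.sum_le_sum hterm
    rw [Finset.sum_sub_distrib] at hsum
    have hnn2 : 0 ≤ ∑ e ∈ univ.filter fun e => ¬ X e = i, x i e * c i e :=
      Finset.sum_nonneg fun e _ => mul_nonneg (hx0 i e) (hc0 i e)
    have hco := hxcost i
    rw [h1]
    linarith
  have htotal : ∑ i, max ((∑ e, if X e = i then c i e else 0) - w i * ∑ e, c i e) 0
      ≤ ∑ e, (1 - x (X e) e) := by
    calc ∑ i, max ((∑ e, if X e = i then c i e else 0) - w i * ∑ e, c i e) 0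
        ≤ ∑ i, ∑ e ∈ univ.filter fun e => X e = i, (1 - x i e) :=
          Finset.sum_le_sum fun i _ => hagent i
      _ = ∑ i, ∑ e ∈ univ.filter fun e => X e = i, (1 - x (X e) e) := by
          refine Finset.sum_congr rfl fun i _ => Finset.sum_congr rfl fun e he => ?_
          rw [(Finset.mem_filter.mp he).2]
      _ = ∑ e, (1 - x (X e) e) := Finset.sum_fiberwise _ _ _
  have hcount : ∑ e, ((univ.filter fun i => x i e ≠ 0).card)
      = (univ.filter fun p : N × M => x p.1 p.2 ≠ 0).card := by
    rw [Finset.card_filter, Fintype.sum_prod_type_right]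
    refine Finset.sum_congr rfl fun e _ => ?_
    rw [Finset.card_filter]
  have hfin : ∑ e, (1 - x (X e) e) ≤ ((Fintype.card N : ℝ) - 1) / 2 := by
    have hstep1 : ∑ e, (1 - x (X e) e)
        ≤ ∑ e, (((univ.filter fun i => x i e ≠ 0).card : ℝ) - 1) / 2 :=
      Finset.sum_le_sum fun e _ => hitem e
    have hstep2 : ∑ e, ((((univ.filter fun i => x i e ≠ 0).card : ℝ)) - 1) / 2
        = ((∑ e, (((univ.filter fun i => x i e ≠ 0).card : ℝ))) - Fintype.card M) / 2 := by
      rw [← Finset.sum_div, Finset.sum_sub_distrib, Finset.sum_const, card_univ]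
      simp
    have hcast : (∑ e, (((univ.filter fun i => x i e ≠ 0).card : ℝ)))
        = ((univ.filter fun p : N × M => x p.1 p.2 ≠ 0).card : ℝ) := by
      rw [← hcount]
      push_cast
      rfl
    have hbound : ((univ.filter fun p : N × M => x p.1 p.2 ≠ 0).card : ℝ) + 1
        ≤ (Fintype.card N : ℝ) + Fintype.card M := by
      exact_mod_cast hxcard
    rw [hstep2, hcast] at hstep1
    linarith
  exact ⟨X, le_trans htotal hfin⟩
end

section
/- Fix natural numbers n, m and a real α ≥ 0. If every identical-ordering (IDO) chores instance with n agents and m items admits an integral allocation with total subsidy at most α, then every chores instance with n agents and m items admits an integral allocation with total subsidy at most α. -/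
/-!
Sort every agent's costs in decreasing order; this gives an IDO instance with the same weights and
the same total costs, which by assumption has an allocation `X'` of subsidy at most `α`. Position
`j` of the sorted instance is given to agent `X' j` at the cost of her `j`-th most expensive item.
By Hall's theorem the positions can be matched bijectively with items so that every agent pays no
more for her real item than for her position: at least `m - j` items cost `X' j` no more than her
`j`-th most expensive one. Bundle costs do not increase, so neither does the subsidy.
-/

open Finset

namespace Tuple

variable {α : Type*} [LinearOrder α] {m : ℕ}

def sortDesc (f : Fin m → α) : Equiv.Perm (Fin m) :=
  Fin.revPerm.trans (sort f)

theorem antitone_sortDesc (f : Fin m → α) : Antitone (f ∘ sortDesc f) :=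
  fun _ _ hjk => monotone_sort f (Fin.rev_le_rev.mpr hjk)

theorem card_le_card_filter_le_sortDesc (f : Fin m → α) (j : Fin m) :
    m - j ≤ #{e | f e ≤ f (sortDesc f j)} := by
  have hsub :
      (Ici j).map (sortDesc f).toEmbedding ⊆ ({e | f e ≤ f (sortDesc f j)} : Finset _) := by
    intro e he
    obtain ⟨k, hk, rfl⟩ := mem_map.mp he
    simpa using antitone_sortDesc f (mem_Ici.mp hk)
  simpa using card_le_card hsub

theorem exists_perm_le_sortDesc (f : Fin m → Fin m → α) :
    ∃ τ : Equiv.Perm (Fin m), ∀ j, f j (τ j) ≤ f j (sortDesc (f j) j) := by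
  set S : Fin m → Finset (Fin m) := fun j => {e | f j e ≤ f j (sortDesc (f j) j)}
  have hall : ∀ s : Finset (Fin m), #s ≤ #(s.biUnion S) := by
    intro s
    rcases s.eq_empty_or_nonempty with rfl | hs
    · simp
    calc #s ≤ #(Ici (s.min' hs)) := card_le_card fun x hx => mem_Ici.mpr (s.min'_le x hx)
      _ = m - s.min' hs := Fin.card_Ici _
      _ ≤ #(S (s.min' hs)) := card_le_card_filter_le_sortDesc _ _
      _ ≤ #(s.biUnion S) := card_le_card (subset_biUnion_of_mem S (s.min'_mem hs))
  obtain ⟨τ, hτinj, hτS⟩ := (all_card_le_biUnion_card_iff_exists_injective S).mp hall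
  exact ⟨Equiv.ofBijective τ (Finite.injective_iff_bijective.mp hτinj),
    fun j => (mem_filter.mp (hτS j)).2⟩

end Tuple

section Subsidy

variable {n m : ℕ}

def totalSubsidy (w : Fin n → ℝ) (c : Fin n → Fin m → ℝ) (X : Fin m → Fin n) : ℝ :=
  ∑ i, max ((∑ e, if X e = i then c i e else 0) - w i * ∑ e, c i e) 0

theorem totalSubsidy_comp_symm_le (w : Fin n → ℝ) {c c' : Fin n → Fin m → ℝ}
    (X : Fin m → Fin n) (τ : Equiv.Perm (Fin m)) (hle : ∀ j, c (X j) (τ j) ≤ c' (X j) j)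
    (hsum : ∀ i, ∑ e, c i e = ∑ e, c' i e) :
    totalSubsidy w c (X ∘ τ.symm) ≤ totalSubsidy w c' X := by
  refine sum_le_sum fun i _ => max_le_max_right _ (sub_le_sub ?_ (by rw [hsum]))
  rw [← Equiv.sum_comp τ]
  refine sum_le_sum fun j _ => ?_
  simp only [Function.comp_apply, Equiv.symm_apply_apply]
  split_ifs with hj
  · exact hj ▸ hle j
  · rfl

end Subsidy

theorem chores_IDO_reduction_general (n m : ℕ) (α : ℝ)
    (hIDO : ∀ (w : Fin n → ℝ) (c : Fin n → Fin m → ℝ),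
      (∀ i, 0 < w i) → (∑ i, w i = 1) →
      (∀ i e, 0 ≤ c i e) → (∀ i e, c i e ≤ 1) →
      (∃ σ : Equiv.Perm (Fin m), ∀ i : Fin n, ∀ j k : Fin m, j ≤ k → c i (σ k) ≤ c i (σ j)) →
      ∃ X : Fin m → Fin n,
        ∑ i, max ((∑ e, if X e = i then c i e else 0) - w i * ∑ e, c i e) 0 ≤ α)
    (w : Fin n → ℝ) (c : Fin n → Fin m → ℝ)
    (hwpos : ∀ i, 0 < w i) (hwsum : ∑ i, w i = 1)
    (hc0 : ∀ i e, 0 ≤ c i e) (hc1 : ∀ i e, c i e ≤ 1) :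
    ∃ X : Fin m → Fin n,
      ∑ i, max ((∑ e, if X e = i then c i e else 0) - w i * ∑ e, c i e) 0 ≤ α := by
  set c' : Fin n → Fin m → ℝ := fun i => c i ∘ Tuple.sortDesc (c i)
  obtain ⟨X', hX'⟩ := hIDO w c' hwpos hwsum (fun i _ => hc0 i _) (fun i _ => hc1 i _)
    ⟨Equiv.refl _, fun i _ _ hjk => Tuple.antitone_sortDesc (c i) hjk⟩
  obtain ⟨τ, hτ⟩ := Tuple.exists_perm_le_sortDesc fun j => c (X' j)
  have hsum : ∀ i, ∑ e, c i e = ∑ e, c' i e :=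
    fun i => (Equiv.sum_comp (Tuple.sortDesc (c i)) (c i)).symm
  exact ⟨X' ∘ τ.symm, (totalSubsidy_comp_symm_le w X' τ hτ hsum).trans hX'⟩

/-- Reduction from general chores instances to identical-ordering (IDO) instances:
if every IDO chores instance with `n` agents and `m` items admits an integral allocation
with total subsidy at most `α`, then so does every chores instance with `n` agents
and `m` items. -/
theorem chores_IDO_reduction (n m : ℕ) (α : ℝ) (hα : 0 ≤ α)
    (hIDO : ∀ (w : Fin n → ℝ) (c : Fin n → Fin m → ℝ),
      (∀ i, 0 < w i) → (∑ i, w i = 1) →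
      (∀ i e, 0 ≤ c i e) → (∀ i e, c i e ≤ 1) →
      (∃ σ : Equiv.Perm (Fin m), ∀ i : Fin n, ∀ j k : Fin m, j ≤ k → c i (σ k) ≤ c i (σ j)) →
      ∃ X : Fin m → Fin n,
        ∑ i, max ((∑ e, if X e = i then c i e else 0) - w i * ∑ e, c i e) 0 ≤ α)
    (w : Fin n → ℝ) (c : Fin n → Fin m → ℝ)
    (hwpos : ∀ i, 0 < w i) (hwsum : ∑ i, w i = 1)
    (hc0 : ∀ i e, 0 ≤ c i e) (hc1 : ∀ i e, c i e ≤ 1) :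
    ∃ X : Fin m → Fin n,
      ∑ i, max ((∑ e, if X e = i then c i e else 0) - w i * ∑ e, c i e) 0 ≤ α :=
  chores_IDO_reduction_general n m α hIDO w c hwpos hwsum hc0 hc1
end

section
/- For every chores instance with n agents there exists a fractional allocation x that is weighted proportional (c_i(x_i) ≤ w_i·c_i(M) for every agent i) and in which at most n − 1 items are fractional, i.e., the number of items e with x_i(e) > 0 for at least two agents i is at most n − 1. -/
open Finset

lemma aux_exists_dir {F N : Type*} [Fintype F] [Fintype N] [Nonempty N]
    (hcard : Fintype.card N ≤ Fintype.card F)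
    (A : (F → ℝ) →ₗ[ℝ] (N → ℝ)) :
    ∃ a : F → ℝ, a ≠ 0 ∧ ∀ i, A a i ≤ 0 := by
  by_cases hinj : Function.Injective A
  · have h1 : Module.finrank ℝ (F → ℝ) = Fintype.card F :=
      Module.finrank_fintype_fun_eq_card ℝ
    have h2 : Module.finrank ℝ (N → ℝ) = Fintype.card N :=
      Module.finrank_fintype_fun_eq_card ℝ
    have hr : Module.finrank ℝ (LinearMap.range A) = Fintype.card F := by
      rw [LinearMap.finrank_range_of_inj hinj, h1]
    have hle : Module.finrank ℝ (LinearMap.range A) ≤ Fintype.card N := by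
      simpa [h2] using Submodule.finrank_le (LinearMap.range A)
    have htop : LinearMap.range A = ⊤ :=
      Submodule.eq_top_of_finrank_eq (by rw [hr, h2]; omega)
    have hsurj : Function.Surjective A := LinearMap.range_eq_top.mp htop
    obtain ⟨a, ha⟩ := hsurj (fun _ => (-1 : ℝ))
    refine ⟨a, ?_, ?_⟩
    · intro h0
      have := congrFun ha (Classical.arbitrary N)
      rw [h0] at this
      simp at this
    · intro i; rw [ha]; norm_num
  · rw [Function.not_injective_iff] at hinj
    obtain ⟨a, b, hab, hne⟩ := hinj
    refine ⟨a - b, sub_ne_zero.mpr hne, ?_⟩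
    intro i
    rw [map_sub]
    simp [hab]

/-- For every chores instance there exists a fractional weighted-proportional allocation
in which at most `n - 1` items are fractional (shared by at least two agents). -/
theorem chores_fractional_WPROP_exists
    {N M : Type*} [Fintype N] [Fintype M]
    (w : N → ℝ) (c : N → M → ℝ)
    (hwpos : ∀ i, 0 < w i) (hwsum : ∑ i, w i = 1)
    (hc0 : ∀ i e, 0 ≤ c i e) (hc1 : ∀ i e, c i e ≤ 1) :
    ∃ x : N → M → ℝ,
      (∀ i e, 0 ≤ x i e) ∧ (∀ i e, x i e ≤ 1) ∧
      (∀ e, ∑ i, x i e = 1) ∧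
      (∀ i, ∑ e, x i e * c i e ≤ w i * ∑ e, c i e) ∧
      (Finset.univ.filter
          (fun e : M => 2 ≤ (Finset.univ.filter (fun i : N => 0 < x i e)).card)).card
        ≤ Fintype.card N - 1 := by
  classical
  have hN : Nonempty N := by
    by_contra h
    rw [not_nonempty_iff] at h
    rw [Finset.univ_eq_empty, Finset.sum_empty] at hwsum
    norm_num at hwsum
  set P : (N → M → ℝ) → Prop := fun x =>
    (∀ i e, 0 ≤ x i e) ∧ (∀ e, ∑ i, x i e = 1) ∧
    (∀ i, ∑ e, x i e * c i e ≤ w i * ∑ e, c i e) with hPdef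
  set supp : (N → M → ℝ) → Finset (N × M) := fun x =>
    Finset.univ.filter (fun p : N × M => 0 < x p.1 p.2) with hsuppdef
  have hPw : P (fun i _ => w i) := by
    refine ⟨fun i e => (hwpos i).le, fun e => hwsum, fun i => ?_⟩
    rw [← Finset.mul_sum]
  set S : Set ℕ := {k | ∃ x, P x ∧ (supp x).card = k} with hSdef
  have hSne : S.Nonempty := ⟨_, _, hPw, rfl⟩
  obtain ⟨x0, hx0P, hx0card⟩ := Nat.sInf_mem hSne
  have hmin : ∀ y, P y → sInf S ≤ (supp y).card := fun y hy => Nat.sInf_le ⟨y, hy, rfl⟩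
  obtain ⟨hx0nn, hx0sum, hx0cost⟩ := hx0P
  refine ⟨x0, hx0nn, ?_, hx0sum, hx0cost, ?_⟩
  · intro i e
    calc x0 i e ≤ ∑ j, x0 j e :=
          Finset.single_le_sum (fun j _ => hx0nn j e) (Finset.mem_univ i)
      _ = 1 := hx0sum e
  -- main part
  by_contra hF
  set F : Finset M := Finset.univ.filter
      (fun e : M => 2 ≤ (Finset.univ.filter (fun i : N => 0 < x0 i e)).card) with hFdef
  have hn1 : 1 ≤ Fintype.card N := Fintype.card_pos
  have hFn : Fintype.card N ≤ F.card := by omega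
  -- choose two owners of each fractional item
  have hex : ∀ u : ↥F, ∃ a b : N, a ≠ b ∧ 0 < x0 a ↑u ∧ 0 < x0 b ↑u := by
    intro u
    have hu := (Finset.mem_filter.mp u.2).2
    obtain ⟨a, ha, b, hb, hab⟩ := Finset.one_lt_card.mp hu
    rw [Finset.mem_filter] at ha hb
    exact ⟨a, b, hab, ha.2, hb.2⟩
  choose i1 i2 hi12 hown1 hown2 using hex
  set B : Matrix N ↥F ℝ := fun i u =>
    (if i = i1 u then c i ↑u else 0) - (if i = i2 u then c i ↑u else 0) with hBdef
  have hcardF : Fintype.card N ≤ Fintype.card ↥F := by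
    rw [Fintype.card_coe]; exact hFn
  obtain ⟨a, ha0, hale⟩ := aux_exists_dir hcardF B.mulVecLin
  set d : N → M → ℝ := fun i e =>
    if h : e ∈ F then
      ((if i = i1 ⟨e, h⟩ then a ⟨e, h⟩ else 0) - (if i = i2 ⟨e, h⟩ then a ⟨e, h⟩ else 0))
    else 0 with hddef
  -- column sums of d vanish
  have hdsum : ∀ e, ∑ i, d i e = 0 := by
    intro e
    by_cases h : e ∈ F
    · simp only [hddef, dif_pos h]
      rw [Finset.sum_sub_distrib]
      rw [Finset.sum_ite_eq' Finset.univ (i1 ⟨e, h⟩), Finset.sum_ite_eq' Finset.univ (i2 ⟨e, h⟩)]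
      simp
    · simp [hddef, dif_neg h]
  -- support of d inside support of x0
  have hdown : ∀ i e, d i e ≠ 0 → 0 < x0 i e := by
    intro i e hne
    by_cases h : e ∈ F
    · simp only [hddef, dif_pos h] at hne
      by_cases h1 : i = i1 ⟨e, h⟩
      · subst h1; exact hown1 ⟨e, h⟩
      · by_cases h2 : i = i2 ⟨e, h⟩
        · subst h2; exact hown2 ⟨e, h⟩
        · simp [h1, h2] at hne
    · simp [hddef, dif_neg h] at hne
  -- cost change
  have hdcost : ∀ i, ∑ e, d i e * c i e = B.mulVecLin a i := by
    intro i
    have h0 : ∀ e ∈ Finset.univ, e ∉ F → d i e * c i e = 0 := by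
      intro e _ he
      simp [hddef, dif_neg he]
    rw [← Finset.sum_subset (Finset.subset_univ F) h0]
    rw [← Finset.sum_attach F (fun e => d i e * c i e)]
    rw [Matrix.mulVecLin_apply, Matrix.mulVec]
    simp only [dotProduct, Finset.univ_eq_attach]
    apply Finset.sum_congr rfl
    intro u _
    simp only [hddef, hBdef, dif_pos u.2, Subtype.coe_eta]
    split_ifs <;> ring
  -- d has a negative entry
  have hdne : ∃ p : N × M, d p.1 p.2 < 0 := by
    obtain ⟨u, hu⟩ := Function.ne_iff.mp ha0
    have hu' : a u ≠ 0 := hu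
    have hdval : d (i1 u) ↑u = a u := by
      simp only [hddef, dif_pos u.2, Subtype.coe_eta]
      simp [hi12 u]
    rcases lt_or_gt_of_ne hu' with h | h
    · exact ⟨(i1 u, ↑u), by rw [hdval] at *; exact h⟩
    · by_contra hall
      push_neg at hall
      have hle1 : d (i1 u) ↑u ≤ ∑ j, d j ↑u := by
        apply Finset.single_le_sum (f := fun j => d j ↑u)
        · intro j _
          exact hall (j, ↑u)
        · exact Finset.mem_univ _
      rw [hdsum, hdval] at hle1
      linarith
  set Negs : Finset (N × M) := Finset.univ.filter (fun p : N × M => d p.1 p.2 < 0)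
    with hNegsdef
  have hNegsne : Negs.Nonempty := by
    obtain ⟨p, hp⟩ := hdne
    exact ⟨p, Finset.mem_filter.mpr ⟨Finset.mem_univ _, hp⟩⟩
  set t : ℝ := Negs.inf' hNegsne (fun p => x0 p.1 p.2 / (-(d p.1 p.2))) with htdef
  have htpos : 0 < t := by
    rw [htdef, Finset.lt_inf'_iff]
    intro p hp
    have hdp : d p.1 p.2 < 0 := (Finset.mem_filter.mp hp).2
    exact div_pos (hdown _ _ hdp.ne) (neg_pos.mpr hdp)
  have htle : ∀ p ∈ Negs, t ≤ x0 p.1 p.2 / (-(d p.1 p.2)) :=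
    fun p hp => Finset.inf'_le _ hp
  set y : N → M → ℝ := fun i e => x0 i e + t * d i e with hydef
  have hynn : ∀ i e, 0 ≤ y i e := by
    intro i e
    rcases le_or_gt 0 (d i e) with h | h
    · exact add_nonneg (hx0nn i e) (mul_nonneg htpos.le h)
    · have hmem : (i, e) ∈ Negs := Finset.mem_filter.mpr ⟨Finset.mem_univ _, h⟩
      have h2 := htle _ hmem
      rw [le_div_iff₀ (neg_pos.mpr h)] at h2
      have h3 : t * -(d i e) = -(t * d i e) := by ring
      simp only [hydef]
      linarith
  have hysum : ∀ e, ∑ i, y i e = 1 := by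
    intro e
    simp only [hydef]
    rw [Finset.sum_add_distrib, hx0sum, ← Finset.mul_sum, hdsum, mul_zero, add_zero]
  have hycost : ∀ i, ∑ e, y i e * c i e ≤ w i * ∑ e, c i e := by
    intro i
    have hsplit : ∑ e, y i e * c i e = ∑ e, x0 i e * c i e + t * ∑ e, d i e * c i e := by
      rw [Finset.mul_sum, ← Finset.sum_add_distrib]
      apply Finset.sum_congr rfl
      intro e _
      simp only [hydef]
      ring
    rw [hsplit, hdcost i]
    have h2 : t * B.mulVecLin a i ≤ 0 := by
      calc t * B.mulVecLin a i ≤ t * 0 := mul_le_mul_of_nonneg_left (hale i) htpos.le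
        _ = 0 := mul_zero t
    linarith [hx0cost i]
  have hPy : P y := ⟨hynn, hysum, hycost⟩
  -- support strictly decreases
  have hsub : supp y ⊆ supp x0 := by
    intro p hp
    have hy : 0 < y p.1 p.2 := (Finset.mem_filter.mp hp).2
    rcases eq_or_lt_of_le (hx0nn p.1 p.2) with h | h
    · exfalso
      have hd0 : d p.1 p.2 = 0 := by
        by_contra hd
        exact absurd (hdown _ _ hd) (by rw [← h]; exact lt_irrefl 0)
      rw [hydef] at hy
      simp only [hd0, mul_zero, add_zero, ← h] at hy
      exact lt_irrefl 0 hy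
    · exact Finset.mem_filter.mpr ⟨Finset.mem_univ _, h⟩
  obtain ⟨pmin, hpmem, hpeq⟩ :=
    Finset.exists_mem_eq_inf' hNegsne (fun p => x0 p.1 p.2 / (-(d p.1 p.2)))
  have hdmin : d pmin.1 pmin.2 < 0 := (Finset.mem_filter.mp hpmem).2
  have hymin : y pmin.1 pmin.2 = 0 := by
    have hfin : x0 pmin.1 pmin.2 / (-(d pmin.1 pmin.2)) * d pmin.1 pmin.2
        = - x0 pmin.1 pmin.2 := by
      have h1 : x0 pmin.1 pmin.2 / -d pmin.1 pmin.2 * d pmin.1 pmin.2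
          = -(x0 pmin.1 pmin.2 / -d pmin.1 pmin.2 * -d pmin.1 pmin.2) := by ring
      rw [h1, div_mul_cancel₀ _ (neg_ne_zero.mpr hdmin.ne)]
    simp only [hydef]
    rw [htdef, hpeq, hfin]
    ring
  have hstrict : supp y ⊂ supp x0 := by
    rw [Finset.ssubset_iff_of_subset hsub]
    refine ⟨pmin, ?_, ?_⟩
    · exact Finset.mem_filter.mpr ⟨Finset.mem_univ _, hdown _ _ hdmin.ne⟩
    · intro hmem
      have := (Finset.mem_filter.mp hmem).2
      rw [hymin] at this
      exact lt_irrefl 0 this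
  have hlt : (supp y).card < (supp x0).card := Finset.card_lt_card hstrict
  have hge := hmin y hPy
  omega
end

section
/- Let a chores instance have exactly three agents 1, 2, 3, and let x be a weighted proportional fractional allocation such that every item other than two distinct items e_1, e_2 is fully allocated to a single agent, item e_1 satisfies x_1(e_1) + x_2(e_1) = 1 with x_1(e_1) > 0 and x_2(e_1) > 0 and x_3(e_1) = 0, and item e_2 satisfies x_2(e_2) + x_3(e_2) = 1 with x_2(e_2) > 0 and x_3(e_2) > 0 and x_1(e_2) = 0. Then there exists an integral allocation X that allocates every integrally-allocated item to its sole holder, allocates e_1 entirely to agent 1 or agent 2, and allocates e_2 entirely to agent 2 or agent 3, such that ∑_{i=1}^{3} max(c_i(X_i) − w_i·c_i(M), 0) ≤ 2/3. -/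
private lemma amgm_contra (u v : ℝ) (h0 : 0 ≤ u) (h1 : u ≤ 1) (h0' : 0 ≤ v) (h1' : v ≤ 1)
    (hX : 1/3 < (1-u)*v) (hY : 1/3 < u*(1-v)) : False := by
  have p1 : (1/3 : ℝ) * (1/3) < ((1-u)*v) * (u*(1-v)) :=
    mul_lt_mul'' hX hY (by norm_num) (by norm_num)
  have p2 : u*(1-u) ≤ 1/4 := by nlinarith [sq_nonneg (u - 1/2)]
  have p3 : v*(1-v) ≤ 1/4 := by nlinarith [sq_nonneg (v - 1/2)]
  have p4 : (u*(1-u))*(v*(1-v)) ≤ 1/16 := by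
    have := mul_le_mul p2 p3 (mul_nonneg h0' (by linarith)) (by norm_num)
    linarith
  have p5 : ((1-u)*v) * (u*(1-v)) = (u*(1-u))*(v*(1-v)) := by ring
  linarith

set_option maxHeartbeats 1000000 in
private lemma core (a b p0 p1 q1 q2 : ℝ)
    (ha0 : 0 < a) (ha1 : a < 1) (hb0 : 0 < b) (hb1 : b < 1)
    (hp00 : 0 ≤ p0) (hp01 : p0 ≤ 1) (hp10 : 0 ≤ p1) (hp11 : p1 ≤ 1)
    (hq10 : 0 ≤ q1) (hq11 : q1 ≤ 1) (hq20 : 0 ≤ q2) (hq21 : q2 ≤ 1) :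
    (max ((1-a)*p0) 0 + max ((1-b)*q1 - (1-a)*p1) 0 + max (-((1-b)*q2)) 0 ≤ 2/3) ∨
    (max ((1-a)*p0) 0 + max (-((1-a)*p1) - b*q1) 0 + max (b*q2) 0 ≤ 2/3) ∨
    (max (-(a*p0)) 0 + max (a*p1 + (1-b)*q1) 0 + max (-((1-b)*q2)) 0 ≤ 2/3) ∨
    (max (-(a*p0)) 0 + max (a*p1 - b*q1) 0 + max (b*q2) 0 ≤ 2/3) := by
  have ha1' : (0:ℝ) ≤ 1 - a := by linarith
  have hb1' : (0:ℝ) ≤ 1 - b := by linarith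
  by_contra hcon
  push_neg at hcon
  obtain ⟨H1, H2, H3, H4⟩ := hcon
  rw [max_eq_left (mul_nonneg ha1' hp00),
      max_eq_right (neg_nonpos.mpr (mul_nonneg hb1' hq20))] at H1
  rw [max_eq_left (mul_nonneg ha1' hp00),
      max_eq_right (by nlinarith [mul_nonneg ha1' hp10, mul_nonneg hb0.le hq10] :
        -((1-a)*p1) - b*q1 ≤ 0),
      max_eq_left (mul_nonneg hb0.le hq20)] at H2
  rw [max_eq_right (neg_nonpos.mpr (mul_nonneg ha0.le hp00)),
      max_eq_left (by positivity),
      max_eq_right (neg_nonpos.mpr (mul_nonneg hb1' hq20))] at H3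
  rw [max_eq_right (neg_nonpos.mpr (mul_nonneg ha0.le hp00)),
      max_eq_left (mul_nonneg hb0.le hq20)] at H4
  have hu : (1-a)*p0 ≤ 1-a := mul_le_of_le_one_right ha1' hp01
  have hz : b*q2 ≤ b := mul_le_of_le_one_right hb0.le hq21
  have hX : a*p1 ≤ a := mul_le_of_le_one_right ha0.le hp11
  have hG : (1-b)*q1 ≤ 1-b := mul_le_of_le_one_right hb1' hq11
  have hr0 : 0 ≤ b*q1 := mul_nonneg hb0.le hq10
  have hv0 : 0 ≤ (1-a)*p1 := mul_nonneg ha1' hp10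
  have hX0 : 0 ≤ a*p1 := mul_nonneg ha0.le hp10
  have hG0 : 0 ≤ (1-b)*q1 := mul_nonneg hb1' hq10
  rcases le_or_gt ((1-b)*q1) ((1-a)*p1) with hA | hA
  · rw [max_eq_right (sub_nonpos.mpr hA)] at H1
    rcases le_or_gt (a*p1) (b*q1) with hB | hB
    · -- case i
      rw [max_eq_right (sub_nonpos.mpr hB)] at H4
      linarith
    · -- case ii
      rw [max_eq_left (sub_nonneg.mpr hB.le)] at H4
      have e1 : b*(1-q1) = b - b*q1 := by ring
      refine amgm_contra b q1 hb0.le hb1.le hq10 hq11 (by linarith) (by linarith)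
  · rw [max_eq_left (sub_nonneg.mpr hA.le)] at H1
    rcases le_or_gt (a*p1) (b*q1) with hB | hB
    · -- case iii
      rw [max_eq_right (sub_nonpos.mpr hB)] at H4
      have e1 : (1-a)*(1-p1) = (1-a) - (1-a)*p1 := by ring
      have e2 : a*(1-(1-p1)) = a*p1 := by ring
      refine amgm_contra a (1-p1) ha0.le ha1.le (by linarith) (by linarith)
        (by linarith) (by nlinarith)
    · -- case iv
      rw [max_eq_left (sub_nonneg.mpr hB.le)] at H4
      have hap : 0 < a*p1 := lt_of_le_of_lt hr0 hB
      have hp1 : 0 < p1 := by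
        by_contra hp
        push_neg at hp
        nlinarith [mul_nonneg ha0.le (neg_nonneg.mpr hp)]
      have hgq : 0 < (1-b)*q1 := lt_of_le_of_lt hv0 hA
      have hq1 : 0 < q1 := by
        by_contra hq
        push_neg at hq
        nlinarith [mul_nonneg hb1' (neg_nonneg.mpr hq)]
      have s1 : (1-a)*p1 * (b*q1) ≤ (1-b)*q1 * (b*q1) :=
        mul_le_mul_of_nonneg_right hA.le hr0
      have s2 : (1-b)*q1 * (b*q1) < (1-b)*q1 * (a*p1) :=
        mul_lt_mul_of_pos_left hB hgq
      have s3 : (b*(1-a))*(p1*q1) < (a*(1-b))*(p1*q1) := by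
        have := s1.trans_lt s2; linarith [this]
      have hba : b < a := by
        by_contra hba'
        push_neg at hba'
        linarith [s3, mul_nonneg (sub_nonneg.mpr hba') (mul_pos hp1 hq1).le]
      have h_lo : 2/3 < a + b := by linarith
      have h_hi : a + b < 4/3 := by linarith
      have h_mid : a - b < 1/3 := by linarith
      have hstar : 1/3 + (a - b) < (1-2*b)*q1 + (2*a-1)*p1 := by linarith [H1, H4, hu, hz]
      rcases le_or_gt a (1/2) with ha2 | ha2 <;> rcases le_or_gt b (1/2) with hb2 | hb2
      · -- a ≤ 1/2, b ≤ 1/2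
        have c1 : (1-2*b)*q1 ≤ 1-2*b := mul_le_of_le_one_right (by linarith) hq11
        have c2 : (2*a-1)*p1 ≤ 0 := mul_nonpos_of_nonpos_of_nonneg (by linarith) hp10
        linarith
      · -- a ≤ 1/2 < b : contradicts b < a
        linarith
      · -- a > 1/2, b ≤ 1/2
        have c1 : (1-2*b)*q1 ≤ 1-2*b := mul_le_of_le_one_right (by linarith) hq11
        have c2 : (2*a-1)*p1 ≤ 2*a-1 := mul_le_of_le_one_right (by linarith) hp11
        linarith
      · -- both > 1/2
        have c1 : (1-2*b)*q1 ≤ 0 := mul_nonpos_of_nonpos_of_nonneg (by linarith) hq10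
        have c2 : (2*a-1)*p1 ≤ 2*a-1 := mul_le_of_le_one_right (by linarith) hp11
        linarith

/-- Three agents sharing two fractional items along a path (item `e₁` shared by agents
`0` and `1`, item `e₂` shared by agents `1` and `2`): any weighted proportional
fractional allocation of this shape can be rounded — keeping every integrally-allocated
item with its sole holder, giving `e₁` to agent `0` or `1` and `e₂` to agent `1` or `2` —
with total subsidy at most `2/3`. -/
theorem chores_three_agents_rounding
    {M : Type*} [Fintype M]
    (w : Fin 3 → ℝ) (c : Fin 3 → M → ℝ)
    (hwpos : ∀ i, 0 < w i) (hwsum : ∑ i, w i = 1)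
    (hc0 : ∀ i e, 0 ≤ c i e) (hc1 : ∀ i e, c i e ≤ 1)
    (x : Fin 3 → M → ℝ)
    (hx0 : ∀ i e, 0 ≤ x i e) (hx1 : ∀ i e, x i e ≤ 1)
    (hxsum : ∀ e, ∑ i, x i e = 1)
    (hWPROP : ∀ i, ∑ e, x i e * c i e ≤ w i * ∑ e, c i e)
    (e1 e2 : M) (hne : e1 ≠ e2)
    (hint : ∀ e, e ≠ e1 → e ≠ e2 → ∃ i, x i e = 1)
    (h1 : x 0 e1 + x 1 e1 = 1) (h1a : 0 < x 0 e1) (h1b : 0 < x 1 e1) (h1c : x 2 e1 = 0)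
    (h2 : x 1 e2 + x 2 e2 = 1) (h2a : 0 < x 1 e2) (h2b : 0 < x 2 e2) (h2c : x 0 e2 = 0) :
    ∃ X : M → Fin 3,
      (∀ e, e ≠ e1 → e ≠ e2 → x (X e) e = 1) ∧
      (X e1 = 0 ∨ X e1 = 1) ∧ (X e2 = 1 ∨ X e2 = 2) ∧
      ∑ i, max ((∑ e, if X e = i then c i e else 0) - w i * ∑ e, c i e) 0 ≤ 2 / 3 := by
  classical
  -- the integral holder function
  have hgex : ∀ e : M, ∃ i : Fin 3, (e ≠ e1 → e ≠ e2 → x i e = 1) := by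
    intro e
    by_cases he1 : e = e1
    · exact ⟨0, fun h _ => absurd he1 h⟩
    · by_cases he2 : e = e2
      · exact ⟨0, fun _ h => absurd he2 h⟩
      · obtain ⟨i, hi⟩ := hint e he1 he2
        exact ⟨i, fun _ _ => hi⟩
  choose g hg using hgex
  -- the key per-agent bound for any rounding that respects integral items
  have key : ∀ (X : M → Fin 3), (∀ e, e ≠ e1 → e ≠ e2 → X e = g e) → ∀ i : Fin 3,
      (∑ e, if X e = i then c i e else 0) - w i * ∑ e, c i e ≤
        ((if X e1 = i then (1:ℝ) else 0) - x i e1) * c i e1 +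
        ((if X e2 = i then (1:ℝ) else 0) - x i e2) * c i e2 := by
    intro X hXg i
    have hW := hWPROP i
    have hsplit : ∀ f : M → ℝ, ∑ e, f e =
        (∑ e ∈ (Finset.univ.erase e1).erase e2, f e) + f e2 + f e1 := by
      intro f
      rw [← Finset.sum_erase_add Finset.univ f (Finset.mem_univ e1),
        ← Finset.sum_erase_add (Finset.univ.erase e1) f
          (Finset.mem_erase.mpr ⟨Ne.symm hne, Finset.mem_univ e2⟩)]
    have hsplit1 : (∑ e, if X e = i then c i e else 0) =
        (∑ e ∈ (Finset.univ.erase e1).erase e2, if X e = i then c i e else 0) +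
        (if X e2 = i then c i e2 else 0) + (if X e1 = i then c i e1 else 0) :=
      hsplit _
    have hsplit2 : (∑ e, x i e * c i e) =
        (∑ e ∈ (Finset.univ.erase e1).erase e2, x i e * c i e) +
        x i e2 * c i e2 + x i e1 * c i e1 := hsplit _
    have hmain : (∑ e ∈ (Finset.univ.erase e1).erase e2, if X e = i then c i e else 0)
        ≤ ∑ e ∈ (Finset.univ.erase e1).erase e2, x i e * c i e := by
      apply Finset.sum_le_sum
      intro e he
      have he2' : e ≠ e2 := (Finset.mem_erase.mp he).1
      have he1' : e ≠ e1 := (Finset.mem_erase.mp ((Finset.mem_erase.mp he).2)).1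
      rw [hXg e he1' he2']
      by_cases hgi : g e = i
      · rw [if_pos hgi]
        have hxe : x i e = 1 := by rw [← hgi]; exact hg e he1' he2'
        rw [hxe, one_mul]
      · rw [if_neg hgi]
        exact mul_nonneg (hx0 i e) (hc0 i e)
    have h1eq : (if X e1 = i then c i e1 else 0) = (if X e1 = i then (1:ℝ) else 0) * c i e1 := by
      split_ifs <;> ring
    have h2eq : (if X e2 = i then c i e2 else 0) = (if X e2 = i then (1:ℝ) else 0) * c i e2 := by
      split_ifs <;> ring
    rw [hsplit1]
    rw [hsplit2] at hW
    linarith [hmain, hW, h1eq, h2eq]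
  have hx11 : x 1 e1 = 1 - x 0 e1 := by linarith
  have hx22 : x 2 e2 = 1 - x 1 e2 := by linarith
  have hcore := core (x 0 e1) (x 1 e2) (c 0 e1) (c 1 e1) (c 1 e2) (c 2 e2)
    h1a (by linarith) h2a (by linarith)
    (hc0 0 e1) (hc1 0 e1) (hc0 1 e1) (hc1 1 e1) (hc0 1 e2) (hc1 1 e2) (hc0 2 e2) (hc1 2 e2)
  rcases hcore with hc | hc | hc | hc
  · -- e1 → 0, e2 → 1
    set X : M → Fin 3 := fun e => if e = e1 then (0 : Fin 3) else if e = e2 then 1 else g e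
      with hXdef
    have hXg : ∀ e, e ≠ e1 → e ≠ e2 → X e = g e := by
      intro e he1 he2; simp [hXdef, he1, he2]
    have hX1 : X e1 = 0 := by simp [hXdef]
    have hX2 : X e2 = 1 := by simp [hXdef, Ne.symm hne]
    refine ⟨X, fun e he1 he2 => by rw [hXg e he1 he2]; exact hg e he1 he2,
      Or.inl hX1, Or.inl hX2, ?_⟩
    have k0 := key X hXg 0
    have k1 := key X hXg 1
    have k2 := key X hXg 2
    rw [hX1, hX2] at k0 k1 k2
    simp only [show ((0:Fin 3) = 1) ↔ False from by decide, show ((0:Fin 3) = 2) ↔ False from by decide,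
      show ((1:Fin 3) = 0) ↔ False from by decide, show ((1:Fin 3) = 2) ↔ False from by decide,
      show ((2:Fin 3) = 0) ↔ False from by decide, show ((2:Fin 3) = 1) ↔ False from by decide,
      if_true, if_false, iff_false] at k0 k1 k2
    norm_num at k0 k1 k2
    rw [h2c] at k0; rw [hx11] at k1; rw [h1c, hx22] at k2
    rw [Fin.sum_univ_three]
    have b0 : (∑ e, if X e = 0 then c 0 e else 0) - w 0 * ∑ e, c 0 e ≤
        (1 - x 0 e1) * c 0 e1 := by linarith
    have b1 : (∑ e, if X e = 1 then c 1 e else 0) - w 1 * ∑ e, c 1 e ≤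
        (1 - x 1 e2) * c 1 e2 - (1 - x 0 e1) * c 1 e1 := by linarith
    have b2 : (∑ e, if X e = 2 then c 2 e else 0) - w 2 * ∑ e, c 2 e ≤
        -((1 - x 1 e2) * c 2 e2) := by linarith
    exact le_trans (add_le_add (add_le_add (max_le_max b0 le_rfl) (max_le_max b1 le_rfl))
      (max_le_max b2 le_rfl)) hc
  · -- e1 → 0, e2 → 2
    set X : M → Fin 3 := fun e => if e = e1 then (0 : Fin 3) else if e = e2 then 2 else g e
      with hXdef
    have hXg : ∀ e, e ≠ e1 → e ≠ e2 → X e = g e := by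
      intro e he1 he2; simp [hXdef, he1, he2]
    have hX1 : X e1 = 0 := by simp [hXdef]
    have hX2 : X e2 = 2 := by simp [hXdef, Ne.symm hne]
    refine ⟨X, fun e he1 he2 => by rw [hXg e he1 he2]; exact hg e he1 he2,
      Or.inl hX1, Or.inr hX2, ?_⟩
    have k0 := key X hXg 0
    have k1 := key X hXg 1
    have k2 := key X hXg 2
    rw [hX1, hX2] at k0 k1 k2
    simp only [show ((0:Fin 3) = 1) ↔ False from by decide, show ((0:Fin 3) = 2) ↔ False from by decide,
      show ((1:Fin 3) = 0) ↔ False from by decide, show ((1:Fin 3) = 2) ↔ False from by decide,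
      show ((2:Fin 3) = 0) ↔ False from by decide, show ((2:Fin 3) = 1) ↔ False from by decide,
      if_true, if_false, iff_false] at k0 k1 k2
    norm_num at k0 k1 k2
    rw [h2c] at k0; rw [hx11] at k1; rw [h1c, hx22] at k2
    rw [Fin.sum_univ_three]
    have b0 : (∑ e, if X e = 0 then c 0 e else 0) - w 0 * ∑ e, c 0 e ≤
        (1 - x 0 e1) * c 0 e1 := by linarith
    have b1 : (∑ e, if X e = 1 then c 1 e else 0) - w 1 * ∑ e, c 1 e ≤
        -((1 - x 0 e1) * c 1 e1) - x 1 e2 * c 1 e2 := by linarith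
    have b2 : (∑ e, if X e = 2 then c 2 e else 0) - w 2 * ∑ e, c 2 e ≤
        x 1 e2 * c 2 e2 := by linarith
    exact le_trans (add_le_add (add_le_add (max_le_max b0 le_rfl) (max_le_max b1 le_rfl))
      (max_le_max b2 le_rfl)) hc
  · -- e1 → 1, e2 → 1
    set X : M → Fin 3 := fun e => if e = e1 then (1 : Fin 3) else if e = e2 then 1 else g e
      with hXdef
    have hXg : ∀ e, e ≠ e1 → e ≠ e2 → X e = g e := by
      intro e he1 he2; simp [hXdef, he1, he2]
    have hX1 : X e1 = 1 := by simp [hXdef]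
    have hX2 : X e2 = 1 := by simp [hXdef, Ne.symm hne]
    refine ⟨X, fun e he1 he2 => by rw [hXg e he1 he2]; exact hg e he1 he2,
      Or.inr hX1, Or.inl hX2, ?_⟩
    have k0 := key X hXg 0
    have k1 := key X hXg 1
    have k2 := key X hXg 2
    rw [hX1, hX2] at k0 k1 k2
    simp only [show ((0:Fin 3) = 1) ↔ False from by decide, show ((0:Fin 3) = 2) ↔ False from by decide,
      show ((1:Fin 3) = 0) ↔ False from by decide, show ((1:Fin 3) = 2) ↔ False from by decide,
      show ((2:Fin 3) = 0) ↔ False from by decide, show ((2:Fin 3) = 1) ↔ False from by decide,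
      if_true, if_false, iff_false] at k0 k1 k2
    norm_num at k0 k1 k2
    rw [h2c] at k0; rw [hx11] at k1; rw [h1c, hx22] at k2
    rw [Fin.sum_univ_three]
    have b0 : (∑ e, if X e = 0 then c 0 e else 0) - w 0 * ∑ e, c 0 e ≤
        -(x 0 e1 * c 0 e1) := by linarith
    have b1 : (∑ e, if X e = 1 then c 1 e else 0) - w 1 * ∑ e, c 1 e ≤
        x 0 e1 * c 1 e1 + (1 - x 1 e2) * c 1 e2 := by linarith
    have b2 : (∑ e, if X e = 2 then c 2 e else 0) - w 2 * ∑ e, c 2 e ≤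
        -((1 - x 1 e2) * c 2 e2) := by linarith
    exact le_trans (add_le_add (add_le_add (max_le_max b0 le_rfl) (max_le_max b1 le_rfl))
      (max_le_max b2 le_rfl)) hc
  · -- e1 → 1, e2 → 2
    set X : M → Fin 3 := fun e => if e = e1 then (1 : Fin 3) else if e = e2 then 2 else g e
      with hXdef
    have hXg : ∀ e, e ≠ e1 → e ≠ e2 → X e = g e := by
      intro e he1 he2; simp [hXdef, he1, he2]
    have hX1 : X e1 = 1 := by simp [hXdef]
    have hX2 : X e2 = 2 := by simp [hXdef, Ne.symm hne]
    refine ⟨X, fun e he1 he2 => by rw [hXg e he1 he2]; exact hg e he1 he2,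
      Or.inr hX1, Or.inr hX2, ?_⟩
    have k0 := key X hXg 0
    have k1 := key X hXg 1
    have k2 := key X hXg 2
    rw [hX1, hX2] at k0 k1 k2
    simp only [show ((0:Fin 3) = 1) ↔ False from by decide, show ((0:Fin 3) = 2) ↔ False from by decide,
      show ((1:Fin 3) = 0) ↔ False from by decide, show ((1:Fin 3) = 2) ↔ False from by decide,
      show ((2:Fin 3) = 0) ↔ False from by decide, show ((2:Fin 3) = 1) ↔ False from by decide,
      if_true, if_false, iff_false] at k0 k1 k2
    norm_num at k0 k1 k2
    rw [h2c] at k0; rw [hx11] at k1; rw [h1c, hx22] at k2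
    rw [Fin.sum_univ_three]
    have b0 : (∑ e, if X e = 0 then c 0 e else 0) - w 0 * ∑ e, c 0 e ≤
        -(x 0 e1 * c 0 e1) := by linarith
    have b1 : (∑ e, if X e = 1 then c 1 e else 0) - w 1 * ∑ e, c 1 e ≤
        x 0 e1 * c 1 e1 - x 1 e2 * c 1 e2 := by linarith
    have b2 : (∑ e, if X e = 2 then c 2 e else 0) - w 2 * ∑ e, c 2 e ≤
        x 1 e2 * c 2 e2 := by linarith
    exact le_trans (add_le_add (add_le_add (max_le_max b0 le_rfl) (max_le_max b1 le_rfl))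
      (max_le_max b2 le_rfl)) hc
end

section
/- For all real numbers y_1, y_2 ∈ [0,1] and α ∈ (0,1], the minimum of the four quantities y_1 + max((1−y_2)·α − y_1, 0), y_2 + max((1−y_1) − y_2·α, 0), y_1 + y_2, and (1−y_1) + (1−y_2)·α is at most 2/3. -/
/-- The analytic core of the three-agent rounding theorem: the minimum of the four
subsidy upper bounds of the four roundings is at most `2/3`. -/
theorem three_agent_four_bounds_min_le (y1 y2 α : ℝ)
    (hy1 : y1 ∈ Set.Icc (0 : ℝ) 1) (hy2 : y2 ∈ Set.Icc (0 : ℝ) 1)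
    (hα : α ∈ Set.Ioc (0 : ℝ) 1) :
    min (min (y1 + max ((1 - y2) * α - y1) 0) (y2 + max ((1 - y1) - y2 * α) 0))
        (min (y1 + y2) ((1 - y1) + (1 - y2) * α)) ≤ 2 / 3 := by
  obtain ⟨h10, h11⟩ := hy1
  obtain ⟨h20, h21⟩ := hy2
  obtain ⟨ha0, ha1⟩ := hα
  by_contra h
  push_neg at h
  simp only [lt_min_iff] at h
  obtain ⟨⟨hA, hB⟩, hC, hD⟩ := h
  rcases le_or_gt ((1 - y2) * α - y1) 0 with h1 | h1
  · rw [max_eq_right h1] at hA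
    rcases le_or_gt ((1 - y1) - y2 * α) 0 with h2 | h2
    · -- y1 > 2/3, y2 > 2/3, contradicts hD
      rw [max_eq_right h2] at hB
      nlinarith [mul_nonneg (sub_nonneg.2 h21) (sub_nonneg.2 ha1)]
    · -- y1 > 2/3, y2*(1-α) > y1 - 1/3, (1-y2)*α > y1 - 1/3
      rw [max_eq_left h2.le] at hB
      have hu : y1 - 1/3 < y2 * (1 - α) := by nlinarith
      have hv : y1 - 1/3 < (1 - y2) * α := by nlinarith
      have ht : (0:ℝ) ≤ y1 - 1/3 := by linarith
      have hm : (y1 - 1/3) * (y1 - 1/3) < (y2 * (1 - α)) * ((1 - y2) * α) :=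
        mul_lt_mul'' hu hv ht ht
      have hp : 0 ≤ y2 * (1 - y2) := mul_nonneg h20 (by linarith)
      have hq : α * (1 - α) ≤ 1/4 := by nlinarith [sq_nonneg (α - 1/2)]
      have hp' : y2 * (1 - y2) ≤ 1/4 := by nlinarith [sq_nonneg (y2 - 1/2)]
      have hq' : 0 ≤ α * (1 - α) := mul_nonneg ha0.le (by linarith)
      have : (y2 * (1 - α)) * ((1 - y2) * α) ≤ 1/16 := by nlinarith
      nlinarith
  · rw [max_eq_left h1.le] at hA
    rcases le_or_gt ((1 - y1) - y2 * α) 0 with h2 | h2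
    · -- (1-y2)*α > 2/3 and y2 > 2/3
      rw [max_eq_right h2] at hB
      nlinarith [mul_nonneg (sub_nonneg.2 h21) (sub_nonneg.2 ha1)]
    · rw [max_eq_left h2.le] at hB
      have k1 : α * y2 < α - 2/3 := by nlinarith
      have k2 : (1:ℝ)/3 < y2 * (2 - α) := by nlinarith
      have h2α : (0:ℝ) < 2 - α := by linarith
      nlinarith [mul_pos ha0 (sub_pos.2 k2), mul_pos h2α (sub_pos.2 k1),
        mul_nonneg (sub_nonneg.2 ha1) (show (0:ℝ) ≤ 4/3 - α by linarith)]
end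

section
/- Let T be a finite tree (a connected acyclic graph) with edge set E. Then E can be partitioned into blocks such that every block has size 1 or 2, every block of size 2 consists of two edges sharing a common vertex, and at most one block has size 1 (in particular, if |E| is even then every block has size exactly 2). -/
/-!
Root the tree at `r`. Every edge is `s(v, parent v)` for exactly one vertex `v ≠ r`, so it
suffices to group the non-root vertices into pairs, each made of two siblings or of a vertex and
its parent, with at most one vertex left over. Take a deepest vertex `v`. If it has a sibling,
pair the two; otherwise, unless `v` is the only vertex left, its parent is not the root (a
shallowest vertex other than `v` is a child of the root), and we pair `v` with its parent. Since
a deepest vertex has no children and a vertex without siblings is its parent's only child, what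
remains is again closed under taking parents up to the root.
-/

open Finset

namespace Finpartition

variable {α β : Type*} [DecidableEq α] [DecidableEq β] {s t : Finset α}

structure IsPairing (good : Finset α → Prop) (P : Finpartition s) : Prop where
  card_le_two : ∀ b ∈ P.parts, #b ≤ 2
  good : ∀ b ∈ P.parts, #b = 2 → good b
  card_filter_le_one : #{b ∈ P.parts | #b = 1} ≤ 1

variable {good : Finset α → Prop} {P : Finpartition s}

lemma IsPairing.card_eq_one_or_two (hP : P.IsPairing good) {b : Finset α} (hb : b ∈ P.parts) :
    #b = 1 ∨ #b = 2 := by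
  have := (P.nonempty_of_mem_parts hb).card_pos
  have := hP.card_le_two b hb
  omega

lemma isPairing_bot (hs : #s ≤ 1) : (⊥ : Finpartition s).IsPairing good where
  card_le_two b hb := by
    obtain ⟨a, -, rfl⟩ := mem_bot_iff.1 hb
    simp
  good b hb hb2 := by
    obtain ⟨a, -, rfl⟩ := mem_bot_iff.1 hb
    simp at hb2
  card_filter_le_one := (card_filter_le _ _).trans ((card_bot s).trans_le hs)

lemma IsPairing.extend (hP : P.IsPairing good) {b : Finset α} (hb2 : #b = 2) (hgood : good b)
    (hsb : Disjoint s b) (hst : s ∪ b = t) :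
    (P.extend (card_pos.1 (hb2 ▸ two_pos)).ne_empty hsb hst).IsPairing good where
  card_le_two c hc := by
    rcases mem_insert.1 hc with rfl | hc
    exacts [hb2.le, hP.card_le_two c hc]
  good c hc hc2 := by
    rcases mem_insert.1 hc with rfl | hc
    exacts [hgood, hP.good c hc hc2]
  card_filter_le_one := by
    rw [extend_parts, filter_insert, if_neg (by omega)]
    exact hP.card_filter_le_one

@[simps]
def image (P : Finpartition s) (f : α → β) (hf : Set.InjOn f s) : Finpartition (s.image f) where
  parts := P.parts.image (Finset.image f)
  supIndep := by
    rw [supIndep_iff_pairwiseDisjoint]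
    rintro _ hc₁ _ hc₂ hne
    obtain ⟨b₁, hb₁, rfl⟩ := mem_image.1 hc₁
    obtain ⟨b₂, hb₂, rfl⟩ := mem_image.1 hc₂
    simp only [Function.onFun, id_eq]
    refine disjoint_left.2 ?_
    rintro _ hy₁ hy₂
    obtain ⟨x₁, hx₁, rfl⟩ := mem_image.1 hy₁
    obtain ⟨x₂, hx₂, hx⟩ := mem_image.1 hy₂
    cases hf (P.subset hb₂ hx₂) (P.subset hb₁ hx₁) hx
    exact hne (congrArg _ (P.eq_of_mem_parts hb₁ hb₂ hx₁ hx₂))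
  sup_parts := by
    simpa [sup_eq_biUnion, biUnion_image] using congrArg (Finset.image f) P.biUnion_parts
  bot_notMem h := by
    obtain ⟨b, hb, hbf⟩ := mem_image.1 h
    exact P.ne_empty hb (image_eq_empty.1 hbf)

lemma card_image_of_mem_parts {f : α → β} (hf : Set.InjOn f s) {b : Finset α}
    (hb : b ∈ P.parts) : #(b.image f) = #b :=
  card_image_of_injOn (hf.mono (P.subset hb))

lemma IsPairing.image {good' : Finset β → Prop} (hP : P.IsPairing good) {f : α → β}
    (hf : Set.InjOn f s) (hgood : ∀ b ⊆ s, good b → good' (b.image f)) :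
    (P.image f hf).IsPairing good' where
  card_le_two _ hc := by
    obtain ⟨b, hb, rfl⟩ := mem_image.1 hc
    rw [card_image_of_mem_parts hf hb]
    exact hP.card_le_two b hb
  good _ hc hc2 := by
    obtain ⟨b, hb, rfl⟩ := mem_image.1 hc
    rw [card_image_of_mem_parts hf hb] at hc2
    exact hgood b (P.subset hb) (hP.good b hb hc2)
  card_filter_le_one := by
    refine le_trans ?_ hP.card_filter_le_one
    rw [image_parts, filter_image]
    refine card_image_le.trans_eq (congrArg card (filter_congr fun b hb => ?_))
    rw [card_image_of_mem_parts hf hb]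

end Finpartition

section RootedForest

variable {α : Type*} {r : α} {p : α → α} {d : α → ℕ} {s : Finset α}

lemma exists_parent_eq_root (hs : s.Nonempty) (hp : Set.MapsTo p s (insert r s))
    (hd : ∀ v ∈ s, d (p v) < d v) : ∃ v ∈ s, p v = r := by
  obtain ⟨v, hv, hmin⟩ := s.exists_min_image d hs
  exact ⟨v, hv, (hp hv).resolve_right fun hpv => (hd v hv).not_ge (hmin _ hpv)⟩

lemma parent_ne_of_forall_depth_le (hd : ∀ v ∈ s, d v = d (p v) + 1) {m : ℕ}
    (hm : ∀ v ∈ s, d v ≤ m) {w : α} (hw : d w = m) : ∀ v ∈ s, p v ≠ w := by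
  rintro v hv rfl
  have := hd v hv
  have := hm v hv
  omega

variable [DecidableEq α]

lemma mapsTo_insert_sdiff {u : Finset α} (hp : Set.MapsTo p s (insert r s))
    (hu : ∀ x ∈ s \ u, p x ∉ u) : Set.MapsTo p ↑(s \ u) (insert r ↑(s \ u)) := by
  intro x hx
  exact (hp (mem_sdiff.1 hx).1).imp_right fun hpx => mem_sdiff.2 ⟨hpx, hu x hx⟩

lemma parent_mem_of_forall_parent_ne (hs : 1 < #s) (hp : Set.MapsTo p s (insert r s))
    (hd : ∀ v ∈ s, d v = d (p v) + 1) {v : α} (hv : v ∈ s) (hmax : ∀ x ∈ s, d x ≤ d v)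
    (hsib : ∀ w ∈ s, w ≠ v → p w ≠ p v) : p v ∈ s := by
  have hrest : (s \ {v}).Nonempty := by
    rw [← card_pos, card_sdiff_of_subset (singleton_subset_iff.2 hv), card_singleton]
    omega
  have hchild := parent_ne_of_forall_depth_le hd hmax rfl
  obtain ⟨x, hx, hxr⟩ := exists_parent_eq_root (d := d) hrest
    (mapsTo_insert_sdiff hp fun x hx => mem_singleton.not.2 (hchild x (mem_sdiff.1 hx).1))
    fun x hx => by have := hd x (mem_sdiff.1 hx).1; omega
  refine (hp hv).resolve_left fun hvr => ?_
  exact hsib x (mem_sdiff.1 hx).1 (by simpa using (mem_sdiff.1 hx).2) (hxr.trans hvr.symm)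

theorem exists_isPairing_of_mapsTo_insert (s : Finset α) (hp : Set.MapsTo p s (insert r s))
    (hd : ∀ v ∈ s, d v = d (p v) + 1) :
    ∃ P : Finpartition s, P.IsPairing fun b => ∃ c, ∀ x ∈ b, x = c ∨ p x = c := by
  induction s using Finset.strongInduction with
  | H s ih =>
  rcases le_or_gt #s 1 with hs | hs
  · exact ⟨⊥, Finpartition.isPairing_bot hs⟩
  obtain ⟨v, hv, hmax⟩ := s.exists_max_image d (card_pos.1 (by omega))
  have pair : ∀ w ∈ s, w ≠ v → (∃ c, ∀ x ∈ ({v, w} : Finset α), x = c ∨ p x = c) →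
      (∀ x ∈ s \ {v, w}, p x ≠ w) →
      ∃ P : Finpartition s, P.IsPairing fun b => ∃ c, ∀ x ∈ b, x = c ∨ p x = c := by
    intro w hw hwv hgood hw_childless
    have hvw : {v, w} ⊆ s := insert_subset hv (singleton_subset_iff.2 hw)
    have hts : s \ {v, w} ⊂ s := sdiff_ssubset hvw (insert_nonempty _ _)
    have htp := mapsTo_insert_sdiff (u := {v, w}) hp fun x hx => by
      simp only [mem_insert, mem_singleton, not_or]
      exact ⟨parent_ne_of_forall_depth_le hd hmax rfl x (mem_sdiff.1 hx).1, hw_childless x hx⟩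
    obtain ⟨P, hP⟩ := ih _ hts htp fun x hx => hd x (hts.subset hx)
    exact ⟨_, hP.extend (card_pair hwv.symm) hgood sdiff_disjoint (sdiff_union_of_subset hvw)⟩
  by_cases hsib : ∃ w ∈ s, w ≠ v ∧ p w = p v
  · obtain ⟨w, hw, hwv, hpw⟩ := hsib
    refine pair w hw hwv ⟨p v, by simp [hpw]⟩ fun x hx =>
      parent_ne_of_forall_depth_le hd hmax ?_ x (mem_sdiff.1 hx).1
    rw [hd w hw, hd v hv, hpw]
  push Not at hsib
  have hpv := parent_mem_of_forall_parent_ne hs hp hd hv hmax hsib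
  refine pair (p v) hpv (fun h => by have := hd v hv; rw [h] at this; omega) ⟨p v, by simp⟩
    fun x hx => hsib x (mem_sdiff.1 hx).1 ?_
  simp only [mem_sdiff, mem_insert, mem_singleton, not_or] at hx
  exact hx.2.1

end RootedForest

namespace SimpleGraph

namespace IsTree

variable {V : Type*} {G : SimpleGraph V} (hG : G.IsTree) (r : V)

noncomputable def pathTo (v : V) : G.Walk v r := (hG.existsUnique_path v r).choose

noncomputable def parent (v : V) : V := (hG.pathTo r v).snd

noncomputable def depth (v : V) : ℕ := (hG.pathTo r v).length

variable {r}

lemma isPath_pathTo (v : V) : (hG.pathTo r v).IsPath := (hG.existsUnique_path v r).choose_spec.1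

lemma eq_pathTo {v : V} {q : G.Walk v r} (hq : q.IsPath) : q = hG.pathTo r v :=
  (hG.existsUnique_path v r).choose_spec.2 q hq

lemma pathTo_tail (v : V) : (hG.pathTo r v).tail = hG.pathTo r (hG.parent r v) :=
  hG.eq_pathTo (hG.isPath_pathTo v).tail

lemma adj_parent {v : V} (hv : v ≠ r) : G.Adj v (hG.parent r v) :=
  Walk.adj_snd (Walk.not_nil_of_ne hv)

lemma depth_eq_depth_parent_add_one {v : V} (hv : v ≠ r) :
    hG.depth r v = hG.depth r (hG.parent r v) + 1 :=
  (Walk.length_tail_add_one (Walk.not_nil_of_ne hv)).symm.trans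
    (congrArg (Walk.length · + 1) (hG.pathTo_tail v))

lemma parent_eq_or_parent_eq_of_adj {a b : V} (h : G.Adj a b) :
    (a ≠ r ∧ hG.parent r a = b) ∨ (b ≠ r ∧ hG.parent r b = a) := by
  by_cases hb : b ∈ (hG.pathTo r a).support
  · refine Or.inl ⟨?_, (hG.isAcyclic.eq_snd_of_adj_start (hG.isPath_pathTo a) h hb).symm⟩
    rintro rfl
    rw [← hG.eq_pathTo Walk.IsPath.nil, Walk.support_nil, List.mem_singleton] at hb
    exact h.ne hb.symm
  · refine Or.inr ⟨fun hbr => hb (hbr ▸ Walk.end_mem_support _), ?_⟩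
    rw [parent, ← hG.eq_pathTo ((hG.isPath_pathTo a).cons (h := h.symm) hb)]
    exact Walk.snd_cons _ _

lemma injOn_parentEdge : Set.InjOn (fun v => s(v, hG.parent r v)) {r}ᶜ := by
  intro a ha b hb hab
  rcases Sym2.eq_iff.1 hab with ⟨h, -⟩ | ⟨hab, hba⟩
  · exact h
  · have := hG.depth_eq_depth_parent_add_one ha
    have := hG.depth_eq_depth_parent_add_one hb
    rw [← hab, hba] at *
    omega

lemma edgeFinset_eq_image_parentEdge [Fintype V] [DecidableEq V] [DecidableRel G.Adj] :
    G.edgeFinset = (univ.erase r).image fun v => s(v, hG.parent r v) := by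
  ext e
  induction e using Sym2.ind with
  | h a b =>
  simp only [mem_edgeFinset, mem_edgeSet, mem_image, mem_erase, mem_univ, and_true]
  constructor
  · intro h
    rcases hG.parent_eq_or_parent_eq_of_adj (r := r) h with ⟨ha, rfl⟩ | ⟨hb, rfl⟩
    exacts [⟨a, ha, rfl⟩, ⟨b, hb, Sym2.eq_swap⟩]
  · rintro ⟨v, hv, he⟩
    rw [← mem_edgeSet, ← he]
    exact hG.adj_parent hv

end IsTree

theorem IsTree.exists_isPairing_edgeFinset {V : Type*} [Fintype V] [DecidableEq V]
    {G : SimpleGraph V} [DecidableRel G.Adj] (hG : G.IsTree) :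
    ∃ P : Finpartition G.edgeFinset, P.IsPairing fun b => ∃ v, ∀ e ∈ b, v ∈ e := by
  obtain ⟨r⟩ := hG.connected.nonempty
  obtain ⟨P, hP⟩ := exists_isPairing_of_mapsTo_insert (r := r) (p := hG.parent r)
    (d := hG.depth r) (univ.erase r) (fun v _ => by simp)
    fun v hv => hG.depth_eq_depth_parent_add_one (ne_of_mem_erase hv)
  rw [hG.edgeFinset_eq_image_parentEdge (r := r)]
  refine ⟨_, hP.image (hG.injOn_parentEdge.mono (by simp)) ?_⟩
  rintro b - ⟨c, hc⟩
  refine ⟨c, forall_mem_image.2 fun x hx => ?_⟩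
  rcases hc x hx with rfl | rfl <;> simp

end SimpleGraph

/-- The edge set of a finite tree can be partitioned into blocks of size `1` or `2`,
where every size-`2` block consists of two edges sharing a common vertex, and at most
one block has size `1`. -/
theorem tree_edge_partition_into_adjacent_pairs
    {V : Type*} [Fintype V] [DecidableEq V]
    (G : SimpleGraph V) [DecidableRel G.Adj] (hT : G.IsTree) :
    ∃ P : Finset (Finset (Sym2 V)),
      (∀ b ∈ P, b ⊆ G.edgeFinset) ∧
      (∀ b ∈ P, b.card = 1 ∨ b.card = 2) ∧
      (P : Set (Finset (Sym2 V))).PairwiseDisjoint id ∧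
      P.biUnion id = G.edgeFinset ∧
      (∀ b ∈ P, b.card = 2 → ∃ v : V, ∀ e ∈ b, v ∈ e) ∧
      (P.filter (fun b => b.card = 1)).card ≤ 1 := by
  obtain ⟨P, hP⟩ := hT.exists_isPairing_edgeFinset
  exact ⟨P.parts, fun _ => P.subset, fun _ => hP.card_eq_one_or_two, P.disjoint,
    P.biUnion_parts, hP.good, hP.card_filter_le_one⟩
end

section
/- Let T be a finite tree with an odd number of edges and let v be a vertex of T. Then there exists an edge e incident to v such that each of the two connected components of the graph obtained from T by deleting e contains an even number of edges. -/
/-!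
For a neighbour `u` of `v`, deleting the bridge `vu` splits the other `m - 1` edges, an even
number, between the component of `v` and the branch `B u` containing `u`, so the two sides have
equal parity and it suffices to find an even branch. The edges of the tree are the `deg v` edges
at `v` together with the pairwise disjoint branches, so `m = ∑ u, (|B u| + 1)`; if every branch
were odd, this sum would be even, contradicting that `m` is odd.
-/

open Finset

namespace SimpleGraph

variable {V : Type*} {G : SimpleGraph V}

def reachableEdgeSet (G : SimpleGraph V) (w : V) : Set (Sym2 V) :=
  {e ∈ G.edgeSet | ∀ a ∈ e, G.Reachable w a}

lemma mem_reachableEdgeSet_of_reachable {w a : V} {e : Sym2 V} (he : e ∈ G.edgeSet)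
    (ha : a ∈ e) (hr : G.Reachable w a) : e ∈ G.reachableEdgeSet w := by
  refine ⟨he, fun b hb => ?_⟩
  obtain rfl | hab := eq_or_ne a b
  · exact hr
  · exact hr.trans (adj_iff_exists_edge.mpr ⟨hab, e, he, ha, hb⟩).reachable

lemma disjoint_reachableEdgeSet {x y : V} (h : ¬ G.Reachable x y) :
    Disjoint (G.reachableEdgeSet x) (G.reachableEdgeSet y) := by
  refine Set.disjoint_left.mpr fun e hx hy => h ?_
  obtain ⟨a, ha⟩ : ∃ a, a ∈ e := ⟨_, e.out_fst_mem⟩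
  exact (hx.2 a ha).trans (hy.2 a ha).symm

lemma reachableEdgeSet_union_eq {x y : V} (h : ∀ a, G.Reachable x a ∨ G.Reachable y a) :
    G.reachableEdgeSet x ∪ G.reachableEdgeSet y = G.edgeSet := by
  refine subset_antisymm (Set.union_subset (fun _ he => he.1) (fun _ he => he.1)) fun e he => ?_
  obtain ⟨a, ha⟩ : ∃ a, a ∈ e := ⟨_, e.out_fst_mem⟩
  exact (h a).imp (mem_reachableEdgeSet_of_reachable he ha)
    (mem_reachableEdgeSet_of_reachable he ha)

lemma Reachable.deleteEdges_of_not_reachable {x y v z : V} (hxy : G.Reachable x y)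
    (hxv : ¬ G.Reachable x v) : (G.deleteEdges {s(v, z)}).Reachable x y := by
  classical
  obtain ⟨p⟩ := hxy
  exact ⟨p.toDeleteEdge s(v, z) fun h => hxv ⟨p.takeUntil v (p.fst_mem_support_of_mem_edges h)⟩⟩

lemma Reachable.deleteEdges_or {x y a : V} (h : G.Reachable x a) :
    (G.deleteEdges {s(x, y)}).Reachable x a ∨ (G.deleteEdges {s(x, y)}).Reachable y a := by
  obtain ⟨p⟩ := h
  suffices ∀ {b : V} (q : G.Walk b a), (G.deleteEdges {s(x, y)}).Reachable x b ∨
      (G.deleteEdges {s(x, y)}).Reachable y b →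
      (G.deleteEdges {s(x, y)}).Reachable x a ∨ (G.deleteEdges {s(x, y)}).Reachable y a from
    this p (.inl .rfl)
  clear p
  intro b q
  induction q with
  | nil => exact id
  | @cons b c _ hbc _ ih =>
    intro hb
    apply ih
    by_cases hedge : s(b, c) = s(x, y)
    · obtain ⟨-, rfl⟩ | ⟨-, rfl⟩ := Sym2.eq_iff.mp hedge
      · exact .inr .rfl
      · exact .inl .rfl
    · have hbc' : (G.deleteEdges {s(x, y)}).Adj b c := deleteEdges_adj.mpr ⟨hbc, hedge⟩
      exact hb.imp (·.trans hbc'.reachable) (·.trans hbc'.reachable)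

lemma Reachable.exists_adj_reachable_deleteEdges {v a : V} (h : G.Reachable v a) (hva : v ≠ a) :
    ∃ u, G.Adj v u ∧ (G.deleteEdges {s(v, u)}).Reachable u a := by
  classical
  obtain ⟨p, hp⟩ := h.some.toPath
  cases p with
  | nil => exact absurd rfl hva
  | cons hvu q =>
    rw [Walk.cons_isPath_iff] at hp
    exact ⟨_, hvu, ⟨q.toDeleteEdge _ fun he => hp.2 (q.fst_mem_support_of_mem_edges he)⟩⟩

lemma Preconnected.ncard_reachableEdgeSet_add_ncard_reachableEdgeSet_add_one [Finite V]
    {v u : V} (hG : G.Preconnected) (h : G.Adj v u) (hb : G.IsBridge s(v, u)) :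
    ((G.deleteEdges {s(v, u)}).reachableEdgeSet v).ncard +
      ((G.deleteEdges {s(v, u)}).reachableEdgeSet u).ncard + 1 = G.edgeSet.ncard := by
  rw [← Set.ncard_union_eq (disjoint_reachableEdgeSet (isBridge_iff.mp hb)),
    reachableEdgeSet_union_eq fun a => (hG v a).deleteEdges_or, edgeSet_deleteEdges,
    Set.ncard_sdiff_singleton_add_one (G.mem_edgeSet.mpr h)]

lemma Preconnected.exists_adj_mem_reachableEdgeSet_deleteEdges (hG : G.Preconnected)
    {v : V} {e : Sym2 V} (he : e ∈ G.edgeSet) (hv : v ∉ e) :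
    ∃ u, G.Adj v u ∧ e ∈ (G.deleteEdges {s(v, u)}).reachableEdgeSet u := by
  obtain ⟨a, ha⟩ : ∃ a, a ∈ e := ⟨_, e.out_fst_mem⟩
  obtain ⟨u, hvu, hr⟩ :=
    (hG v a).exists_adj_reachable_deleteEdges (ne_of_mem_of_not_mem ha hv).symm
  have he' : e ∈ (G.deleteEdges {s(v, u)}).edgeSet := by
    rw [edgeSet_deleteEdges]
    exact ⟨he, fun h => hv (h ▸ Sym2.mem_mk_left v u)⟩
  exact ⟨u, hvu, mem_reachableEdgeSet_of_reachable he' ha hr⟩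

lemma disjoint_reachableEdgeSet_deleteEdges {v u u' : V} (h' : G.Adj v u') (hne : u ≠ u')
    (hb : G.IsBridge s(v, u)) (hb' : G.IsBridge s(v, u')) :
    Disjoint ((G.deleteEdges {s(v, u)}).reachableEdgeSet u)
      ((G.deleteEdges {s(v, u')}).reachableEdgeSet u') := by
  refine Set.disjoint_left.mpr fun e he he' => ?_
  obtain ⟨a, ha⟩ : ∃ a, a ∈ e := ⟨_, e.out_fst_mem⟩
  -- `u'` reaches `a` without passing through `v`, so the path `v u' ⋯ a ⋯ u` avoids `vu`.
  have hu'a : (G.deleteEdges {s(v, u)}).Reachable u' a :=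
    ((he'.2 a ha).deleteEdges_of_not_reachable fun hr => isBridge_iff.mp hb' hr.symm).mono
      (by rw [deleteEdges_deleteEdges]; exact deleteEdges_anti Set.subset_union_right)
  have hvu' : (G.deleteEdges {s(v, u)}).Adj v u' :=
    deleteEdges_adj.mpr ⟨h', by simp [hne.symm, h'.ne.symm]⟩
  exact isBridge_iff.mp hb ((hvu'.reachable.trans hu'a).trans (he.2 a ha).symm)

lemma IsTree.card_edgeFinset_eq_degree_add_sum_ncard [Fintype V] [DecidableEq V]
    [DecidableRel G.Adj] (hT : G.IsTree) (v : V) :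
    #G.edgeFinset = G.degree v +
      ∑ u ∈ G.neighborFinset v, ((G.deleteEdges {s(v, u)}).reachableEdgeSet u).ncard := by
  have hb : ∀ {u}, G.Adj v u → G.IsBridge s(v, u) :=
    (isAcyclic_iff_forall_adj_isBridge.mp hT.isAcyclic ·)
  have hv : ∀ {u e}, G.Adj v u → e ∈ (G.deleteEdges {s(v, u)}).reachableEdgeSet u → v ∉ e :=
    fun h he hv => isBridge_iff.mp (hb h) (he.2 v hv).symm
  set branch := fun u => (Set.toFinite ((G.deleteEdges {s(v, u)}).reachableEdgeSet u)).toFinset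
  have hcover : G.edgeFinset = G.incidenceFinset v ∪ (G.neighborFinset v).biUnion branch := by
    ext e
    simp only [Finset.mem_union, Finset.mem_biUnion, Set.Finite.mem_toFinset, mem_edgeFinset,
      mem_incidenceFinset, mem_neighborFinset, branch]
    refine ⟨fun he => ?_, ?_⟩
    · by_cases hve : v ∈ e
      · exact .inl ⟨he, hve⟩
      · exact .inr (hT.connected.preconnected.exists_adj_mem_reachableEdgeSet_deleteEdges he hve)
    · rintro (he | ⟨u, -, he⟩)
      · exact he.1
      · exact edgeSet_mono (deleteEdges_le _) he.1
  have hdisj : Disjoint (G.incidenceFinset v) ((G.neighborFinset v).biUnion branch) := by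
    simp only [Finset.disjoint_left, Finset.mem_biUnion, mem_incidenceFinset, mem_neighborFinset,
      Set.Finite.mem_toFinset, branch]
    rintro e ⟨-, hve⟩ ⟨u, hu, he⟩
    exact hv hu he hve
  have hpair : (G.neighborFinset v : Set V).PairwiseDisjoint branch := by
    intro u hu u' hu' hne
    simp only [Function.onFun, branch, Set.Finite.disjoint_toFinset]
    simp only [coe_neighborFinset, mem_neighborSet] at hu hu'
    exact disjoint_reachableEdgeSet_deleteEdges hu' hne (hb hu) (hb hu')
  rw [hcover, card_union_of_disjoint hdisj, card_biUnion hpair, card_incidenceFinset_eq_degree]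
  exact congrArg _ (sum_congr rfl fun u _ => (Set.ncard_eq_toFinset_card _ _).symm)

end SimpleGraph

open SimpleGraph

/-- In a finite tree with an odd number of edges, every vertex `v` has an incident
edge whose deletion leaves two connected components each containing an even number
of edges. -/
theorem odd_tree_exists_incident_edge_even_components
    {V : Type*} [Fintype V] [DecidableEq V]
    (G : SimpleGraph V) [DecidableRel G.Adj] (hT : G.IsTree)
    (hodd : Odd G.edgeFinset.card) (v : V) :
    ∃ u : V, G.Adj v u ∧
      Even {e ∈ (G.deleteEdges {s(v, u)}).edgeSet |
              ∀ a ∈ e, (G.deleteEdges {s(v, u)}).Reachable v a}.ncard ∧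
      Even {e ∈ (G.deleteEdges {s(v, u)}).edgeSet |
              ∀ a ∈ e, (G.deleteEdges {s(v, u)}).Reachable u a}.ncard := by
  show ∃ u, G.Adj v u ∧ Even ((G.deleteEdges {s(v, u)}).reachableEdgeSet v).ncard ∧
    Even ((G.deleteEdges {s(v, u)}).reachableEdgeSet u).ncard
  by_contra! hcon
  have hsides : ∀ u, G.Adj v u → ((G.deleteEdges {s(v, u)}).reachableEdgeSet v).ncard +
      ((G.deleteEdges {s(v, u)}).reachableEdgeSet u).ncard + 1 = #G.edgeFinset := fun u h => by
    rw [← Set.ncard_coe_finset, coe_edgeFinset]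
    exact hT.connected.preconnected.ncard_reachableEdgeSet_add_ncard_reachableEdgeSet_add_one h
      (isAcyclic_iff_forall_adj_isBridge.mp hT.isAcyclic h)
  have hbranch : ∀ u ∈ G.neighborFinset v,
      Even (((G.deleteEdges {s(v, u)}).reachableEdgeSet u).ncard + 1) := by
    intro u hu
    have h := (mem_neighborFinset G v u).mp hu
    have hpar := hsides u h ▸ hodd
    rw [Nat.odd_add_one, Nat.not_odd_iff_even, Nat.even_add] at hpar
    rw [Nat.even_add_one]
    exact fun heven => hcon u h (hpar.mpr heven) heven
  refine Nat.not_even_iff_odd.mpr hodd ?_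
  rw [hT.card_edgeFinset_eq_degree_add_sum_ncard v, ← card_neighborFinset_eq_degree, add_comm,
    card_eq_sum_ones, ← sum_add_distrib]
  exact even_sum _ hbranch
end

section
/- Let k ≥ 2 be an integer, let x_1, …, x_{k+1} ∈ [0,1] with ∑_{i=1}^{k+1} x_i = 1 and x_{k+1} = max_{1 ≤ i ≤ k+1} x_i, and let y, α ∈ [0,1]. Set S = ∑_{i=1}^{k} (1 − x_i)/2. Then min{ S + max((1 − x_{k+1}) − (1 − y)·α, 0) + (1 − y), S + (1 − x_{k+1}) + y·α } ≤ (2k+1)/3. -/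
private lemma aux_prod_bound (y α s : ℝ) (hy0 : 0 ≤ y) (hy1 : y ≤ 1)
    (ha0 : 0 ≤ α) (ha1 : α ≤ 1) (hs : 1/4 ≤ s) (hst : s ≤ y * α) :
    (1 - y) * (1 - α) ≤ s := by
  have h1 : 1 ≤ y + α := by nlinarith [sq_nonneg (y - α)]
  have h2 : (1 - y) * (1 - α) ≤ α * (1 - α) := by
    apply mul_le_mul_of_nonneg_right _ (by linarith)
    linarith
  have h3 : α * (1 - α) ≤ 1/4 := by nlinarith [sq_nonneg (2*α - 1)]
  linarith

/-- The analytic core of the subsidy bound for an expanded atom-path with `h = k+1`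
attached edges, in the case where the last agent's cost `α` for her attached item is at
most her cost for the shared item and she holds the maximum fraction of the shared
item: the minimum of the two candidate scheme bounds is at most `(2k+1)/3`. -/
theorem expanded_atom_path_h_eq_k_add_one_alpha_core (k : ℕ) (hk : 2 ≤ k)
    (x : Fin (k + 1) → ℝ) (hx : ∀ i, x i ∈ Set.Icc (0 : ℝ) 1)
    (hxsum : ∑ i, x i = 1)
    (hmax : ∀ i, x i ≤ x (Fin.last k))
    (y α : ℝ) (hy : y ∈ Set.Icc (0 : ℝ) 1) (hα : α ∈ Set.Icc (0 : ℝ) 1) :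
    min ((∑ i : Fin k, (1 - x i.castSucc) / 2)
          + max ((1 - x (Fin.last k)) - (1 - y) * α) 0 + (1 - y))
        ((∑ i : Fin k, (1 - x i.castSucc) / 2) + (1 - x (Fin.last k)) + y * α)
      ≤ (2 * (k : ℝ) + 1) / 3 := by
  obtain ⟨hy0, hy1⟩ := hy
  obtain ⟨ha0, ha1⟩ := hα
  have hk2 : (2 : ℝ) ≤ (k : ℝ) := by exact_mod_cast hk
  set z := x (Fin.last k) with hzdef
  -- z is at least 1/(k+1)
  have hz1 : (1 : ℝ) ≤ ((k : ℝ) + 1) * z := by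
    have h := Finset.sum_le_sum (s := Finset.univ) (fun i _ => hmax i)
    rw [hxsum] at h
    rw [Finset.sum_const, Finset.card_univ, Fintype.card_fin] at h
    calc (1:ℝ) ≤ (k+1 : ℕ) • z := h
    _ = ((k:ℝ) + 1) * z := by push_cast [nsmul_eq_mul]; ring
  -- sum of the first k coordinates
  have hsum : ∑ i : Fin k, x i.castSucc = 1 - z := by
    have h := Fin.sum_univ_castSucc (f := x)
    rw [hxsum] at h
    linarith
  have hS : ∑ i : Fin k, (1 - x i.castSucc) / 2 = ((k : ℝ) - (1 - z)) / 2 := by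
    rw [← Finset.sum_div, Finset.sum_sub_distrib, Finset.sum_const, Finset.card_univ,
      Fintype.card_fin, hsum]
    push_cast
    ring
  set u : ℝ := 1 - z with hudef
  set c : ℝ := ((k : ℝ) + 2) / 6 with hcdef
  have hzpos : 0 < (k : ℝ) + 1 := by linarith
  have hcu : 1/4 ≤ c - u/2 := by
    have hzge : 1 / ((k : ℝ) + 1) ≤ z := by
      rw [div_le_iff₀ hzpos]
      linarith [hz1]
    rw [hcdef, hudef]
    rw [div_le_iff₀ hzpos] at hzge
    nlinarith [hzge, hk2]
  have hcge : (2:ℝ)/3 ≤ c := by rw [hcdef]; linarith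
  have htarget : (2 * (k : ℝ) + 1) / 3 = ((k : ℝ) - u) / 2 + c + u / 2 := by
    rw [hcdef, hudef]; ring
  by_cases hcase : y * α ≤ c - u / 2
  · -- second scheme works
    apply le_trans (min_le_right _ _)
    rw [hS, htarget]
    linarith
  · push_neg at hcase
    apply le_trans (min_le_left _ _)
    rw [hS, htarget]
    have hyge : c - u/2 < y := by
      have : y * α ≤ y := by nlinarith
      linarith
    by_cases hcase2 : u - (1 - y) * α ≤ 0
    · rw [max_eq_right hcase2]
      -- need 1 - y ≤ c + u/2
      linarith
    · push_neg at hcase2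
      rw [max_eq_left (le_of_lt hcase2)]
      -- need u - (1-y)*α + 1 - y ≤ c + u/2, i.e. (1-y)*(1-α) ≤ c - u/2
      have hkey : (1 - y) * (1 - α) ≤ c - u/2 :=
        aux_prod_bound y α (c - u/2) hy0 hy1 ha0 ha1 hcu (le_of_lt hcase)
      nlinarith [hkey]
end

section
/- For every goods instance with n agents there exists a fractional allocation x that is weighted proportional (v_i(x_i) ≥ w_i·v_i(M) for every agent i) and in which at most n − 1 items are fractional, i.e., the number of items e with x_i(e) > 0 for at least two agents i is at most n − 1. -/
/-!
Fix an agent `i₀` and consider the compact polytope of fractional allocations giving every other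
agent its proportional share. Its points maximising the value of `i₀` form an exposed face, which
contains an extreme point `z` (Krein–Milman); the proportional allocation `x i e = w i` shows that
`i₀` also gets its share at `z`. An extreme point has at most `n - 1` fractional items: otherwise,
shifting mass between two owners of each fractional item gives more free parameters than the
`n - 1` value constraints, hence a nonzero direction `d` with `z ± t • d` feasible for small `t`.
-/

open Finset Filter Topology

theorem exists_ne_zero_forall_sum_mul_eq_zero {K ι κ : Type*} [Field K] [Fintype κ]
    (C : ι → κ → K) (A : Finset ι) (F : Finset κ) (h : #A < #F) :
    ∃ γ : κ → K, γ ≠ 0 ∧ (∀ e ∉ F, γ e = 0) ∧ ∀ j ∈ A, ∑ e, C j e * γ e = 0 := by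
  classical
  let T : (κ → K) →ₗ[K] (A → K) × ({e // e ∉ F} → K) :=
    (Matrix.of fun (j : A) e => C j e).mulVecLin.prod (LinearMap.funLeft K K Subtype.val)
  have hdim : Module.finrank K ((A → K) × ({e // e ∉ F} → K)) < Module.finrank K (κ → K) := by
    simp only [Module.finrank_prod, Module.finrank_fintype_fun_eq_card, Fintype.card_coe,
      Fintype.card_subtype_compl]
    have := F.card_le_univ
    omega
  obtain ⟨γ, hγ, hγ0⟩ :=
    (Submodule.ne_bot_iff _).1 (LinearMap.ker_ne_bot_of_finrank_lt (f := T) hdim)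
  simp only [T, LinearMap.ker_prod, Submodule.mem_inf, LinearMap.mem_ker,
    Matrix.mulVecBilin_apply, funext_iff, Matrix.mulVec, dotProduct, Matrix.of_apply,
    Pi.zero_apply, Subtype.forall, LinearMap.funLeft_apply] at hγ
  exact ⟨γ, hγ0, hγ.2, hγ.1⟩

theorem le_one_of_nonneg_of_sum_eq_one {ι : Type*} [Fintype ι] {x : ι → ℝ} (hx : ∀ i, 0 ≤ x i)
    (hsum : ∑ i, x i = 1) (i : ι) : x i ≤ 1 :=
  hsum ▸ single_le_sum (fun j _ => hx j) (mem_univ i)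

theorem IsCompact.exists_mem_extremePoints_forall_le {E : Type*} [AddCommGroup E] [Module ℝ E]
    [TopologicalSpace E] [T2Space E] [IsTopologicalAddGroup E] [ContinuousSMul ℝ E]
    [LocallyConvexSpace ℝ E] {s : Set E} (hs : IsCompact s) (hne : s.Nonempty) (l : E →L[ℝ] ℝ) :
    ∃ z ∈ s.extremePoints ℝ, ∀ y ∈ s, l y ≤ l z := by
  have hexp : IsExposed ℝ s {z ∈ s | ∀ y ∈ s, l y ≤ l z} := fun _ => ⟨l, rfl⟩
  obtain ⟨z₀, hz₀, hmax⟩ := hs.exists_isMaxOn hne l.continuous.continuousOn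
  obtain ⟨z, hz⟩ := (hexp.isCompact hs).extremePoints_nonempty ⟨z₀, hz₀, hmax⟩
  exact ⟨z, hexp.isExtreme.extremePoints_subset_extremePoints hz, hz.1.2⟩

theorem eq_zero_of_eventually_add_smul_mem_extremePoints {E : Type*} [AddCommGroup E] [Module ℝ E]
    {s : Set E} {x y : E} (hx : x ∈ s.extremePoints ℝ) (hy : ∀ᶠ t in 𝓝 (0 : ℝ), x + t • y ∈ s) :
    y = 0 := by
  have hy' : ∀ᶠ t in 𝓝 (0 : ℝ), x + (-t) • y ∈ s :=
    (neg_zero (G := ℝ) ▸ tendsto_neg (0 : ℝ)).eventually hy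
  obtain ⟨t, ht, hts⟩ := (hy.and hy').exists_gt
  have hmid : x ∈ openSegment ℝ (x + t • y) (x + (-t) • y) :=
    ⟨1 / 2, 1 / 2, by norm_num, by norm_num, by norm_num, by module⟩
  simpa [ht.ne'] using hx.2 hts.1 hts.2 hmid

theorem eventually_nonneg_add_mul {z d : ℝ} (hz : 0 ≤ z) (hd : d ≠ 0 → 0 < z) :
    ∀ᶠ t in 𝓝 (0 : ℝ), 0 ≤ z + t * d := by
  rcases eq_or_ne d 0 with rfl | hd0
  · simp [hz]
  · have : Tendsto (fun t : ℝ => z + t * d) (𝓝 0) (𝓝 z) :=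
      (by fun_prop : Continuous fun t : ℝ => z + t * d).tendsto' 0 z (by simp)
    exact this.eventually_const_le (hd hd0)

section Allocation

variable {N M : Type*} [Fintype N] [Fintype M]

def allocationPolytope (v : N → M → ℝ) (A : Finset N) (c : N → ℝ) : Set (N → M → ℝ) :=
  {x | (∀ i e, 0 ≤ x i e) ∧ (∀ e, ∑ i, x i e = 1) ∧ ∀ j ∈ A, c j ≤ ∑ e, x j e * v j e}

noncomputable def fractionalItems (x : N → M → ℝ) : Finset M :=
  {e | 2 ≤ #{i | 0 < x i e}}

variable (v : N → M → ℝ) (A : Finset N) (c : N → ℝ)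

theorem isCompact_allocationPolytope : IsCompact (allocationPolytope v A c) := by
  have hclosed : IsClosed (allocationPolytope v A c) := by
    simp only [allocationPolytope, Set.ofPred_and, Set.ofPred_forall]
    refine .inter (isClosed_iInter fun i => isClosed_iInter fun e => ?_) (.inter
      (isClosed_iInter fun e => ?_) (isClosed_iInter fun j => isClosed_iInter fun _ => ?_))
    · exact isClosed_le continuous_const (by fun_prop)
    · exact isClosed_eq (by fun_prop) continuous_const
    · exact isClosed_le continuous_const (by fun_prop)
  refine (isCompact_Icc (a := 0) (b := 1)).of_isClosed_subset hclosed fun x hx =>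
    ⟨fun i e => hx.1 i e, fun i e => le_one_of_nonneg_of_sum_eq_one (hx.1 · e) (hx.2.1 e) i⟩

theorem exists_pair_pos_of_mem_fractionalItems {x : N → M → ℝ} {e : M}
    (he : e ∈ fractionalItems x) : ∃ a b, a ≠ b ∧ 0 < x a e ∧ 0 < x b e := by
  obtain ⟨a, ha, b, hb, hab⟩ := one_lt_card.1 (mem_filter.1 he).2
  exact ⟨a, b, hab, (mem_filter.1 ha).2, (mem_filter.1 hb).2⟩

theorem exists_ne_zero_exchange {z : N → M → ℝ} (h : #A < #(fractionalItems z)) :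
    ∃ d : N → M → ℝ, d ≠ 0 ∧ (∀ i e, d i e ≠ 0 → 0 < z i e) ∧ (∀ e, ∑ i, d i e = 0) ∧
      ∀ j ∈ A, ∑ e, d j e * v j e = 0 := by
  classical
  have : Nonempty N := by
    obtain ⟨e, he⟩ := card_pos.1 (A.card.zero_le.trans_lt h)
    exact ⟨(exists_pair_pos_of_mem_fractionalItems he).choose⟩
  choose! a b hab ha hb using fun e (he : e ∈ fractionalItems z) =>
    exists_pair_pos_of_mem_fractionalItems he
  let δ : N → M → ℝ := fun i e => (if i = a e then 1 else 0) - (if i = b e then 1 else 0)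
  obtain ⟨γ, hγ0, hγF, hγA⟩ :=
    exists_ne_zero_forall_sum_mul_eq_zero (fun j e => δ j e * v j e) A _ h
  refine ⟨fun i e => γ e * δ i e, ?_, ?_, ?_, ?_⟩
  · obtain ⟨e, he⟩ := Function.ne_iff.1 hγ0
    have heF : e ∈ fractionalItems z := by_contra fun h => he (hγF e h)
    intro hd
    exact he (by simpa [δ, hab e heF] using congrFun (congrFun hd (a e)) e)
  · intro i e hd
    have heF : e ∈ fractionalItems z := by_contra fun h => by simp [hγF e h] at hd
    by_cases hia : i = a e
    · exact hia ▸ ha e heF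
    by_cases hib : i = b e
    · exact hib ▸ hb e heF
    simp [δ, hia, hib] at hd
  · intro e
    simp [δ, ← mul_sum, sum_sub_distrib]
  · intro j hj
    exact (sum_congr rfl fun e _ => by ring).trans (hγA j hj)

theorem card_fractionalItems_le_of_mem_extremePoints {z : N → M → ℝ}
    (hz : z ∈ (allocationPolytope v A c).extremePoints ℝ) : #(fractionalItems z) ≤ #A := by
  by_contra! h
  obtain ⟨d, hd0, hsupp, hcol, hval⟩ := exists_ne_zero_exchange v A h
  obtain ⟨hnonneg, hsum, hvalue⟩ := hz.1
  refine hd0 (eq_zero_of_eventually_add_smul_mem_extremePoints hz ?_)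
  filter_upwards [eventually_all.2 fun i => eventually_all.2 fun e =>
    eventually_nonneg_add_mul (hnonneg i e) (hsupp i e)] with t ht
  refine ⟨ht, fun e => ?_, fun j hj => ?_⟩
  · simp [sum_add_distrib, ← mul_sum, hcol, hsum]
  · simpa [add_mul, sum_add_distrib, mul_assoc, ← mul_sum, hval j hj] using hvalue j hj

theorem exists_mem_extremePoints_allocationPolytope_forall_value_le (i : N)
    (hne : (allocationPolytope v A c).Nonempty) :
    ∃ z ∈ (allocationPolytope v A c).extremePoints ℝ, ∀ y ∈ allocationPolytope v A c,
      ∑ e, y i e * v i e ≤ ∑ e, z i e * v i e := by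
  let value : (N → M → ℝ) →L[ℝ] ℝ :=
    ∑ e, v i e • (ContinuousLinearMap.proj e).comp
      (ContinuousLinearMap.proj (R := ℝ) (φ := fun _ : N => M → ℝ) i)
  have hvalue (x : N → M → ℝ) : value x = ∑ e, x i e * v i e := by
    simp [value, mul_comm]
  simpa only [hvalue] using
    (isCompact_allocationPolytope v A c).exists_mem_extremePoints_forall_le hne value

end Allocation

theorem goods_fractional_WPROP_exists_general
    {N M : Type*} [Fintype N] [Fintype M]
    (w : N → ℝ) (v : N → M → ℝ)
    (hwpos : ∀ i, 0 < w i) (hwsum : ∑ i, w i = 1) :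
    ∃ x : N → M → ℝ,
      (∀ i e, 0 ≤ x i e) ∧ (∀ i e, x i e ≤ 1) ∧
      (∀ e, ∑ i, x i e = 1) ∧
      (∀ i, w i * ∑ e, v i e ≤ ∑ e, x i e * v i e) ∧
      (Finset.univ.filter
          (fun e : M => 2 ≤ (Finset.univ.filter (fun i : N => 0 < x i e)).card)).card
        ≤ Fintype.card N - 1 := by
  classical
  obtain ⟨i₀, -⟩ := exists_ne_zero_of_sum_ne_zero (hwsum.symm ▸ one_ne_zero : ∑ i, w i ≠ 0)
  let A := univ.erase i₀
  have hproportional : (fun i _ => w i) ∈ allocationPolytope v A (fun j => w j * ∑ e, v j e) :=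
    ⟨fun i _ => (hwpos i).le, fun _ => hwsum, fun j _ => (mul_sum ..).le⟩
  obtain ⟨z, hz, hmax⟩ :=
    exists_mem_extremePoints_allocationPolytope_forall_value_le v A _ i₀ ⟨_, hproportional⟩
  obtain ⟨hnonneg, hsum, hvalue⟩ := hz.1
  refine ⟨z, hnonneg, fun i e => le_one_of_nonneg_of_sum_eq_one (hnonneg · e) (hsum e) i, hsum,
    fun i => ?_, ?_⟩
  · rcases eq_or_ne i i₀ with rfl | hi
    · simpa [mul_sum] using hmax _ hproportional
    · exact hvalue i (mem_erase.2 ⟨hi, mem_univ i⟩)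
  · simpa [A, fractionalItems, card_erase_of_mem] using
      card_fractionalItems_le_of_mem_extremePoints v A _ hz

/-- For every goods instance there exists a fractional weighted-proportional allocation
in which at most `n - 1` items are fractional (shared by at least two agents). -/
theorem goods_fractional_WPROP_exists
    {N M : Type*} [Fintype N] [Fintype M]
    (w : N → ℝ) (v : N → M → ℝ)
    (hwpos : ∀ i, 0 < w i) (hwsum : ∑ i, w i = 1)
    (hv0 : ∀ i e, 0 ≤ v i e) (hv1 : ∀ i e, v i e ≤ 1) :
    ∃ x : N → M → ℝ,
      (∀ i e, 0 ≤ x i e) ∧ (∀ i e, x i e ≤ 1) ∧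
      (∀ e, ∑ i, x i e = 1) ∧
      (∀ i, w i * ∑ e, v i e ≤ ∑ e, x i e * v i e) ∧
      (Finset.univ.filter
          (fun e : M => 2 ≤ (Finset.univ.filter (fun i : N => 0 < x i e)).card)).card
        ≤ Fintype.card N - 1 :=
  goods_fractional_WPROP_exists_general w v hwpos hwsum
end

section
/- Let a goods instance have exactly three agents 1, 2, 3, and let x be a weighted proportional fractional allocation such that every item other than two distinct items e_1, e_2 is fully allocated to a single agent, item e_1 satisfies x_1(e_1) + x_2(e_1) = 1 with x_1(e_1) > 0 and x_2(e_1) > 0 and x_3(e_1) = 0, and item e_2 satisfies x_2(e_2) + x_3(e_2) = 1 with x_2(e_2) > 0 and x_3(e_2) > 0 and x_1(e_2) = 0. Then there exists an integral allocation X that allocates every integrally-allocated item to its sole holder, allocates e_1 entirely to agent 1 or agent 2, and allocates e_2 entirely to agent 2 or agent 3, such that ∑_{i=1}^{3} max(w_i·v_i(M) − v_i(X_i), 0) ≤ 2/3. -/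
lemma sixteenth_bound (a u : ℝ) (ha0 : 0 ≤ a) (ha1 : a ≤ 1) (hu : 0 ≤ u) (hu1 : u ≤ 1) :
    (a - a*u) * ((1-a)*u) ≤ 1/16 := by
  nlinarith [mul_nonneg (sq_nonneg (2*a-1)) (mul_nonneg hu (by linarith : (0:ℝ) ≤ 1-u)),
    sq_nonneg (2*u-1)]

set_option maxHeartbeats 2000000 in
lemma key_arith (a c u t p q : ℝ)
    (ha0 : 0 ≤ a) (ha1 : a ≤ 1) (hc0 : 0 ≤ c) (hc1 : c ≤ 1)
    (hu : 0 ≤ u) (hu1 : u ≤ 1) (ht : 0 ≤ t) (ht1 : t ≤ 1)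
    (hp : 0 ≤ p) (hp1 : p ≤ 1) (hq : 0 ≤ q) (hq1 : q ≤ 1) :
    (1-a)*u + c*t ≤ 2/3 ∨ max ((1-a)*u - (1-c)*t) 0 + (1-c)*q ≤ 2/3 ∨
    a*p + max (c*t - a*u) 0 ≤ 2/3 ∨ a*p + (1-c)*q ≤ 2/3 := by
  by_contra hcon
  push_neg at hcon
  obtain ⟨h1, h2, h3, h4⟩ := hcon
  have hap : a*p ≤ a := mul_le_of_le_one_right ha0 hp1
  have hdq : (1-c)*q ≤ 1-c := mul_le_of_le_one_right (by linarith) hq1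
  have hbu : (1-a)*u ≤ 1-a := mul_le_of_le_one_right (by linarith) hu1
  have hct : c*t ≤ c := mul_le_of_le_one_right hc0 ht1
  have hbu0 : 0 ≤ (1-a)*u := mul_nonneg (by linarith) hu
  have hct0 : 0 ≤ c*t := mul_nonneg hc0 ht
  have hau0 : 0 ≤ a*u := mul_nonneg ha0 hu
  have hdt0 : 0 ≤ (1-c)*t := mul_nonneg (by linarith) ht
  rcases le_or_gt ((1-a)*u - (1-c)*t) 0 with hm1 | hm1
  · rw [max_eq_right hm1] at h2
    rcases le_or_gt (c*t - a*u) 0 with hm2 | hm2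
    · rw [max_eq_right hm2] at h3
      linarith
    · rw [max_eq_left hm2.le] at h3
      -- case lr : (1-a)u ≤ (1-c)t, ct > au
      have hA : 2/3 - c*t < a - a*u := by linarith
      have hB : 2/3 - c*t < (1-a)*u := by linarith
      have hX : (1:ℝ)/3 < 2/3 - c*t := by linarith
      have hBnd := sixteenth_bound a u ha0 ha1 hu hu1
      have hXX : (1:ℝ)/3 * (1/3) < (2/3 - c*t) * (2/3 - c*t) :=
        mul_lt_mul'' hX hX (by norm_num) (by norm_num)
      have hAB : (2/3 - c*t) * (2/3 - c*t) < (a - a*u) * ((1-a)*u) :=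
        mul_lt_mul'' hA hB (by linarith) (by linarith)
      linarith
  · rw [max_eq_left hm1.le] at h2
    rcases le_or_gt (c*t - a*u) 0 with hm2 | hm2
    · rw [max_eq_right hm2] at h3
      -- case rl : (1-a)u > (1-c)t, ct ≤ au ; a > 2/3
      have hA : 2/3 - (1-a)*u < (1-c) - (1-c)*t := by linarith
      have hB : 2/3 - (1-a)*u < c*t := by linarith
      have hX : (1:ℝ)/3 < 2/3 - (1-a)*u := by linarith
      have hBnd := sixteenth_bound (1-c) t (by linarith) (by linarith) ht ht1
      have hXX : (1:ℝ)/3 * (1/3) < (2/3 - (1-a)*u) * (2/3 - (1-a)*u) :=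
        mul_lt_mul'' hX hX (by norm_num) (by norm_num)
      have hAB : (2/3 - (1-a)*u) * (2/3 - (1-a)*u) < ((1-c) - (1-c)*t) * (c*t) :=
        mul_lt_mul'' hA hB (by linarith) (by linarith)
      nlinarith [hBnd, hXX, hAB]
    · rw [max_eq_left hm2.le] at h3
      -- hard case rr
      have k1 : 2*t/3 ≤ (1-a)*u := by
        linarith [mul_nonneg ht (by linarith : (0:ℝ) ≤ (1-a)*u - (1-c)*t + (1-c) - 2/3),
          mul_nonneg (by linarith : (0:ℝ) ≤ 1-t) hm1.le]
      have k2 : 2*u/3 ≤ c*t := by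
        linarith [mul_nonneg hu (by linarith : (0:ℝ) ≤ a - a*u + c*t - 2/3),
          mul_nonneg (by linarith : (0:ℝ) ≤ 1-u) hm2.le]
      have k3 : c < a + 1/3 := by linarith
      have k4 : 0 ≤ u * (c*(1-a) - 4/9) := by
        linarith [mul_nonneg hc0 (by linarith : (0:ℝ) ≤ (1-a)*u - 2*t/3), k2]
      rcases eq_or_lt_of_le hu with hu0 | hu0
      · subst hu0
        have hctt : c*t ≤ t := mul_le_of_le_one_left ht hc1
        linarith [k1, h1, hctt]
      · have k5 : 4/9 ≤ c*(1-a) := by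
          rcases lt_or_ge (c*(1-a)) (4/9) with h | h
          · exact absurd k4 (by nlinarith [mul_pos hu0 (by linarith : (0:ℝ) < 4/9 - c*(1-a))])
          · exact h
        rcases eq_or_lt_of_le ha1 with ha' | ha'
        · subst ha'
          have : c*(1-(1:ℝ)) = 0 := by ring
          linarith
        · linarith [k5, mul_pos (by linarith : (0:ℝ) < a + 1/3 - c)
            (by linarith : (0:ℝ) < 1 - a), sq_nonneg (a - 1/3)]

set_option maxHeartbeats 2000000 in
/-- Goods version of the three-agent rounding theorem: a weighted proportional
fractional allocation of goods to three agents with two fractional items along a path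
can be rounded — keeping every integrally-allocated item with its sole holder, giving
`e₁` to agent `0` or `1` and `e₂` to agent `1` or `2` — with total subsidy at most `2/3`. -/
theorem goods_three_agents_rounding
    {M : Type*} [Fintype M]
    (w : Fin 3 → ℝ) (v : Fin 3 → M → ℝ)
    (hwpos : ∀ i, 0 < w i) (hwsum : ∑ i, w i = 1)
    (hv0 : ∀ i e, 0 ≤ v i e) (hv1 : ∀ i e, v i e ≤ 1)
    (x : Fin 3 → M → ℝ)
    (hx0 : ∀ i e, 0 ≤ x i e) (hx1 : ∀ i e, x i e ≤ 1)
    (hxsum : ∀ e, ∑ i, x i e = 1)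
    (hWPROP : ∀ i, w i * ∑ e, v i e ≤ ∑ e, x i e * v i e)
    (e1 e2 : M) (hne : e1 ≠ e2)
    (hint : ∀ e, e ≠ e1 → e ≠ e2 → ∃ i, x i e = 1)
    (h1 : x 0 e1 + x 1 e1 = 1) (h1a : 0 < x 0 e1) (h1b : 0 < x 1 e1) (h1c : x 2 e1 = 0)
    (h2 : x 1 e2 + x 2 e2 = 1) (h2a : 0 < x 1 e2) (h2b : 0 < x 2 e2) (h2c : x 0 e2 = 0) :
    ∃ X : M → Fin 3,
      (∀ e, e ≠ e1 → e ≠ e2 → x (X e) e = 1) ∧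
      (X e1 = 0 ∨ X e1 = 1) ∧ (X e2 = 1 ∨ X e2 = 2) ∧
      ∑ i, max (w i * (∑ e, v i e) - ∑ e, if X e = i then v i e else 0) 0 ≤ 2 / 3 := by
  classical
  have hx01 : ∀ (e : M) (i j : Fin 3), x j e = 1 → i ≠ j → x i e = 0 := by
    intro e i j hj hij
    have hsub : x i e + x j e ≤ 1 := by
      have hss := Finset.sum_le_sum_of_subset_of_nonneg
        (Finset.subset_univ ({i, j} : Finset (Fin 3))) (fun k _ _ => hx0 k e)
      rwa [Finset.sum_pair hij, hxsum e] at hss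
    have := hx0 i e
    linarith
  have main : ∀ i1 i2 : Fin 3, i1 ≠ 2 → i2 ≠ 0 →
      ∀ B : ℝ,
      max (x 0 e1 * v 0 e1 - (if i1 = 0 then v 0 e1 else 0)) 0 +
      max ((x 1 e1 * v 1 e1 - (if i1 = 1 then v 1 e1 else 0)) +
           (x 1 e2 * v 1 e2 - (if i2 = 1 then v 1 e2 else 0))) 0 +
      max (x 2 e2 * v 2 e2 - (if i2 = 2 then v 2 e2 else 0)) 0 ≤ B →
      ∃ X : M → Fin 3,
        (∀ e, e ≠ e1 → e ≠ e2 → x (X e) e = 1) ∧ X e1 = i1 ∧ X e2 = i2 ∧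
        ∑ i, max (w i * (∑ e, v i e) - ∑ e, if X e = i then v i e else 0) 0 ≤ B := by
    intro i1 i2 hi1 hi2 B hB
    set X : M → Fin 3 :=
      fun e => if h : e = e1 then i1 else if h' : e = e2 then i2
        else Classical.choose (hint e h h') with hXdef
    have hXe1 : X e1 = i1 := by simp [hXdef]
    have hXe2 : X e2 = i2 := by
      have hne' : ¬ (e2 = e1) := fun h => hne h.symm
      simp [hXdef, hne']
    have hXint : ∀ e, e ≠ e1 → e ≠ e2 → x (X e) e = 1 := by
      intro e ha hb
      simp only [hXdef, dif_neg ha, dif_neg hb]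
      exact Classical.choose_spec (hint e ha hb)
    refine ⟨X, hXint, hXe1, hXe2, ?_⟩
    have hval : ∀ i : Fin 3,
        (∑ e, x i e * v i e) - (∑ e, if X e = i then v i e else 0)
        = (x i e1 * v i e1 - (if X e1 = i then v i e1 else 0))
          + (x i e2 * v i e2 - (if X e2 = i then v i e2 else 0)) := by
      intro i
      rw [← Finset.sum_sub_distrib]
      have hrestr : (∑ e, (x i e * v i e - if X e = i then v i e else 0))
          = ∑ e ∈ ({e1, e2} : Finset M), (x i e * v i e - if X e = i then v i e else 0) := by
        symm
        apply Finset.sum_subset (Finset.subset_univ _)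
        intro e _ he
        simp only [Finset.mem_insert, Finset.mem_singleton, not_or] at he
        obtain ⟨he1, he2⟩ := he
        by_cases hXe : X e = i
        · rw [if_pos hXe]
          have hx1' : x i e = 1 := by rw [← hXe]; exact hXint e he1 he2
          rw [hx1']; ring
        · rw [if_neg hXe]
          have hx0' : x i e = 0 :=
            hx01 e i (X e) (hXint e he1 he2) (fun h => hXe h.symm)
          rw [hx0']; ring
      rw [hrestr, Finset.sum_pair hne]
    have hsub : ∀ i : Fin 3,
        max (w i * (∑ e, v i e) - ∑ e, (if X e = i then v i e else 0)) 0
        ≤ max ((x i e1 * v i e1 - (if X e1 = i then v i e1 else 0))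
          + (x i e2 * v i e2 - (if X e2 = i then v i e2 else 0))) 0 := by
      intro i
      refine max_le_max ?_ le_rfl
      have hw := hWPROP i
      have h' := hval i
      linarith
    rw [Fin.sum_univ_three]
    have b0 := hsub 0
    have b1 := hsub 1
    have b2 := hsub 2
    rw [hXe1, hXe2] at b0 b1 b2
    have e20 : x 0 e2 * v 0 e2 - (if i2 = 0 then v 0 e2 else 0) = 0 := by
      rw [if_neg hi2, h2c]; ring
    have e12 : x 2 e1 * v 2 e1 - (if i1 = 2 then v 2 e1 else 0) = 0 := by
      rw [if_neg hi1, h1c]; ring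
    rw [e20, add_zero] at b0
    rw [e12, zero_add] at b2
    linarith [b0, b1, b2, hB]
  have hb1 : x 1 e1 = 1 - x 0 e1 := by linarith
  have hd1 : x 2 e2 = 1 - x 1 e2 := by linarith
  obtain hT | hT | hT | hT := key_arith (x 0 e1) (x 1 e2) (v 1 e1) (v 1 e2) (v 0 e1) (v 2 e2)
      (hx0 0 e1) (hx1 0 e1) (hx0 1 e2) (hx1 1 e2) (hv0 1 e1) (hv1 1 e1) (hv0 1 e2) (hv1 1 e2)
      (hv0 0 e1) (hv1 0 e1) (hv0 2 e2) (hv1 2 e2)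
  · -- e1 → 0, e2 → 2
    obtain ⟨X, hP, hXe1, hXe2, hbound⟩ := main 0 2 (by decide) (by decide) (2/3) (by
      rw [if_pos (rfl : (0:Fin 3) = 0), if_neg (by decide : ¬ (0:Fin 3) = 1),
        if_neg (by decide : ¬ (2:Fin 3) = 1), if_pos (rfl : (2:Fin 3) = 2)]
      have m0 : max (x 0 e1 * v 0 e1 - v 0 e1) 0 = 0 :=
        max_eq_right (by linarith [mul_le_of_le_one_left (hv0 0 e1) (hx1 0 e1)])
      have m2 : max (x 2 e2 * v 2 e2 - v 2 e2) 0 = 0 :=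
        max_eq_right (by linarith [mul_le_of_le_one_left (hv0 2 e2) (hx1 2 e2)])
      have harg : x 1 e1 * v 1 e1 = (1 - x 0 e1) * v 1 e1 := by rw [hb1]
      have m1 : max ((x 1 e1 * v 1 e1 - 0) + (x 1 e2 * v 1 e2 - 0)) 0 ≤ 2/3 :=
        max_le (by linarith [hT, harg]) (by norm_num)
      linarith [m0, m1, m2])
    exact ⟨X, hP, Or.inl hXe1, Or.inr hXe2, hbound⟩
  · -- e1 → 0, e2 → 1
    obtain ⟨X, hP, hXe1, hXe2, hbound⟩ := main 0 1 (by decide) (by decide) (2/3) (by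
      rw [if_pos (rfl : (0:Fin 3) = 0), if_neg (by decide : ¬ (0:Fin 3) = 1),
        if_pos (rfl : (1:Fin 3) = 1), if_neg (by decide : ¬ (1:Fin 3) = 2)]
      have m0 : max (x 0 e1 * v 0 e1 - v 0 e1) 0 = 0 :=
        max_eq_right (by linarith [mul_le_of_le_one_left (hv0 0 e1) (hx1 0 e1)])
      have harg : (x 1 e1 * v 1 e1 - 0) + (x 1 e2 * v 1 e2 - v 1 e2)
          = (1 - x 0 e1) * v 1 e1 - (1 - x 1 e2) * v 1 e2 := by rw [hb1]; ring
      rw [harg]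
      have m2 : max (x 2 e2 * v 2 e2 - 0) 0 = (1 - x 1 e2) * v 2 e2 := by
        have h' : x 2 e2 * v 2 e2 - 0 = (1 - x 1 e2) * v 2 e2 := by rw [hd1]; ring
        rw [h']
        exact max_eq_left (mul_nonneg (by linarith [hx1 1 e2]) (hv0 2 e2))
      linarith [m0, m2, hT])
    exact ⟨X, hP, Or.inl hXe1, Or.inl hXe2, hbound⟩
  · -- e1 → 1, e2 → 2
    obtain ⟨X, hP, hXe1, hXe2, hbound⟩ := main 1 2 (by decide) (by decide) (2/3) (by
      rw [if_neg (by decide : ¬ (1:Fin 3) = 0), if_pos (rfl : (1:Fin 3) = 1),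
        if_neg (by decide : ¬ (2:Fin 3) = 1), if_pos (rfl : (2:Fin 3) = 2)]
      have m0 : max (x 0 e1 * v 0 e1 - 0) 0 = x 0 e1 * v 0 e1 := by
        rw [sub_zero]
        exact max_eq_left (mul_nonneg (hx0 0 e1) (hv0 0 e1))
      have harg : (x 1 e1 * v 1 e1 - v 1 e1) + (x 1 e2 * v 1 e2 - 0)
          = x 1 e2 * v 1 e2 - x 0 e1 * v 1 e1 := by rw [hb1]; ring
      rw [harg]
      have m2 : max (x 2 e2 * v 2 e2 - v 2 e2) 0 = 0 :=
        max_eq_right (by linarith [mul_le_of_le_one_left (hv0 2 e2) (hx1 2 e2)])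
      linarith [m0, m2, hT])
    exact ⟨X, hP, Or.inr hXe1, Or.inr hXe2, hbound⟩
  · -- e1 → 1, e2 → 1
    obtain ⟨X, hP, hXe1, hXe2, hbound⟩ := main 1 1 (by decide) (by decide) (2/3) (by
      rw [if_neg (by decide : ¬ (1:Fin 3) = 0), if_pos (rfl : (1:Fin 3) = 1),
        if_pos (rfl : (1:Fin 3) = 1), if_neg (by decide : ¬ (1:Fin 3) = 2)]
      have m0 : max (x 0 e1 * v 0 e1 - 0) 0 = x 0 e1 * v 0 e1 := by
        rw [sub_zero]
        exact max_eq_left (mul_nonneg (hx0 0 e1) (hv0 0 e1))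
      have m1 : max ((x 1 e1 * v 1 e1 - v 1 e1) + (x 1 e2 * v 1 e2 - v 1 e2)) 0 = 0 :=
        max_eq_right (by linarith [mul_le_of_le_one_left (hv0 1 e1) (hx1 1 e1),
          mul_le_of_le_one_left (hv0 1 e2) (hx1 1 e2)])
      have m2 : max (x 2 e2 * v 2 e2 - 0) 0 = (1 - x 1 e2) * v 2 e2 := by
        have h' : x 2 e2 * v 2 e2 - 0 = (1 - x 1 e2) * v 2 e2 := by rw [hd1]; ring
        rw [h']
        exact max_eq_left (mul_nonneg (by linarith [hx1 1 e2]) (hv0 2 e2))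
      linarith [m0, m1, m2, hT])
    exact ⟨X, hP, Or.inr hXe1, Or.inl hXe2, hbound⟩
end

section
/- Let a, y, v ∈ [0,1] be real numbers and set m = min{ max(a − y·v, 0) + y, a + (1 − y)·v }. If a ≤ 1/2 then m ≤ (1 + a)/2, and if a ≥ 1/2 then m ≤ a + 1/4. -/
/-- The analytic content of the biased threshold rounding bound for goods:
for `a, y, v ∈ [0,1]` with `m = min (max (a - y·v) 0 + y) (a + (1-y)·v)`,
if `a ≤ 1/2` then `m ≤ (1+a)/2`, and if `a ≥ 1/2` then `m ≤ a + 1/4`. -/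
theorem biased_threshold_rounding_bound_goods (a y v : ℝ)
    (ha : a ∈ Set.Icc (0 : ℝ) 1) (hy : y ∈ Set.Icc (0 : ℝ) 1)
    (hv : v ∈ Set.Icc (0 : ℝ) 1) :
    (a ≤ 1 / 2 →
      min (max (a - y * v) 0 + y) (a + (1 - y) * v) ≤ (1 + a) / 2) ∧
    (1 / 2 ≤ a →
      min (max (a - y * v) 0 + y) (a + (1 - y) * v) ≤ a + 1 / 4) := by
  obtain ⟨ha0, ha1⟩ := ha
  obtain ⟨hy0, hy1⟩ := hy
  obtain ⟨hv0, hv1⟩ := hv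
  have key : y * (1 - v) ≤ 1 / 4 ∨ (1 - y) * v ≤ 1 / 4 := by
    rcases le_total (y * (1 - v)) ((1 - y) * v) with h | h
    · left
      nlinarith [sq_nonneg (2 * y - 1), sq_nonneg (2 * v - 1),
        mul_nonneg hy0 (by linarith : (0:ℝ) ≤ 1 - v)]
    · right
      nlinarith [sq_nonneg (2 * y - 1), sq_nonneg (2 * v - 1),
        mul_nonneg (by linarith : (0:ℝ) ≤ 1 - y) hv0]
  have hyv : (0:ℝ) ≤ (1 - y) * (1 - v) :=
    mul_nonneg (by linarith) (by linarith)
  constructor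
  · intro hha
    rcases le_total (y * v) a with hc | hc
    · rw [max_eq_left (by linarith)]
      rcases key with k | k
      · exact min_le_of_left_le (by nlinarith)
      · exact min_le_of_right_le (by nlinarith)
    · rw [max_eq_right (by linarith)]
      rcases le_total y ((1 + a) / 2) with h' | h'
      · exact min_le_of_left_le (by linarith)
      · exact min_le_of_right_le (by nlinarith)
  · intro hha
    rcases le_total (y * v) a with hc | hc
    · rw [max_eq_left (by linarith)]
      rcases key with k | k
      · exact min_le_of_left_le (by nlinarith)
      · exact min_le_of_right_le (by nlinarith)
    · rw [max_eq_right (by linarith)]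
      rcases le_total y (a + 1 / 4) with h' | h'
      · exact min_le_of_left_le (by linarith)
      · exact min_le_of_right_le (by nlinarith)
end

section
/- Let a chores instance have exactly three agents 1, 2, 3, and let x be a weighted proportional fractional allocation such that every item other than two distinct items e_1, e_2 is fully allocated to a single agent, item e_1 satisfies x_1(e_1) + x_2(e_1) = 1 with x_3(e_1) = 0, and item e_2 satisfies x_2(e_2) + x_3(e_2) = 1 with x_1(e_2) = 0. Let a_1 = c_2(e_1) and a_2 = c_2(e_2), assume a_1 ≥ a_2 and a_1 > 0, and set α = a_2/a_1, y_1 = x_2(e_1), y_2 = x_2(e_2). For an integral allocation X agreeing with x on all integrally-allocated items, write s(X) = ∑_{i=1}^{3} max(c_i(X_i) − w_i·c_i(M), 0). Then: (i) the allocation X^{LL} giving e_1 to agent 1 and e_2 to agent 2 satisfies s(X^{LL}) ≤ y_1 + max((1−y_2)·α − y_1, 0); (ii) the allocation X^{RR} giving e_1 to agent 2 and e_2 to agent 3 satisfies s(X^{RR}) ≤ y_2 + max((1−y_1) − y_2·α, 0); (iii) the allocation X^{LR} giving e_1 to agent 1 and e_2 to agent 3 satisfies s(X^{LR}) ≤ y_1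 + y_2; (iv) the allocation X^{RL} giving both e_1 and e_2 to agent 2 satisfies s(X^{RL}) ≤ (1−y_1) + (1−y_2)·α. -/
set_option maxHeartbeats 1600000 in
/-- Upper bounds on the total subsidy of the four rounding schemes `LL`, `RR`, `LR`,
`RL` for a weighted proportional fractional allocation of chores to three agents with
two fractional items `e₁` (shared by agents `0`, `1`) and `e₂` (shared by agents
`1`, `2`), where `a₁ = c₁(e₁)`, `a₂ = c₁(e₂)` with `a₂ ≤ a₁` and `a₁ > 0`,
`α = a₂/a₁`, `y₁ = x₁(e₁)` and `y₂ = x₁(e₂)`. -/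
theorem chores_three_agents_four_roundings
    {M : Type*} [Fintype M]
    (w : Fin 3 → ℝ) (c : Fin 3 → M → ℝ)
    (hwpos : ∀ i, 0 < w i) (hwsum : ∑ i, w i = 1)
    (hc0 : ∀ i e, 0 ≤ c i e) (hc1 : ∀ i e, c i e ≤ 1)
    (x : Fin 3 → M → ℝ)
    (hx0 : ∀ i e, 0 ≤ x i e) (hx1 : ∀ i e, x i e ≤ 1)
    (hxsum : ∀ e, ∑ i, x i e = 1)
    (hWPROP : ∀ i, ∑ e, x i e * c i e ≤ w i * ∑ e, c i e)
    (e1 e2 : M) (hne : e1 ≠ e2)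
    (hint : ∀ e, e ≠ e1 → e ≠ e2 → ∃ i, x i e = 1)
    (h1 : x 0 e1 + x 1 e1 = 1) (h1c : x 2 e1 = 0)
    (h2 : x 1 e2 + x 2 e2 = 1) (h2c : x 0 e2 = 0)
    (a1 a2 : ℝ) (ha1 : a1 = c 1 e1) (ha2 : a2 = c 1 e2)
    (hle : a2 ≤ a1) (hpos : 0 < a1)
    (α y1 y2 : ℝ) (hα : α = a2 / a1) (hy1 : y1 = x 1 e1) (hy2 : y2 = x 1 e2) :
    -- (i) scheme LL: `e₁` to agent 0, `e₂` to agent 1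
    (∀ X : M → Fin 3, (∀ e, e ≠ e1 → e ≠ e2 → x (X e) e = 1) →
      X e1 = 0 → X e2 = 1 →
      ∑ i, max ((∑ e, if X e = i then c i e else 0) - w i * ∑ e, c i e) 0
        ≤ y1 + max ((1 - y2) * α - y1) 0) ∧
    -- (ii) scheme RR: `e₁` to agent 1, `e₂` to agent 2
    (∀ X : M → Fin 3, (∀ e, e ≠ e1 → e ≠ e2 → x (X e) e = 1) →
      X e1 = 1 → X e2 = 2 →
      ∑ i, max ((∑ e, if X e = i then c i e else 0) - w i * ∑ e, c i e) 0
        ≤ y2 + max ((1 - y1) - y2 * α) 0) ∧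
    -- (iii) scheme LR: `e₁` to agent 0, `e₂` to agent 2
    (∀ X : M → Fin 3, (∀ e, e ≠ e1 → e ≠ e2 → x (X e) e = 1) →
      X e1 = 0 → X e2 = 2 →
      ∑ i, max ((∑ e, if X e = i then c i e else 0) - w i * ∑ e, c i e) 0
        ≤ y1 + y2) ∧
    -- (iv) scheme RL: both `e₁` and `e₂` to agent 1
    (∀ X : M → Fin 3, (∀ e, e ≠ e1 → e ≠ e2 → x (X e) e = 1) →
      X e1 = 1 → X e2 = 1 →
      ∑ i, max ((∑ e, if X e = i then c i e else 0) - w i * ∑ e, c i e) 0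
        ≤ (1 - y1) + (1 - y2) * α) := by
  classical
  -- if x j e = 1 then x i e = 0 for i ≠ j
  have hx_unique : ∀ (e : M) (j : Fin 3), x j e = 1 → ∀ i, i ≠ j → x i e = 0 := by
    intro e j hj i hij
    have hsum := hxsum e
    have herase : x j e + ∑ k ∈ Finset.univ.erase j, x k e = 1 := by
      rw [Finset.add_sum_erase Finset.univ (fun k => x k e) (Finset.mem_univ j)]
      exact hsum
    have h0 : ∑ k ∈ Finset.univ.erase j, x k e = 0 := by linarith
    exact (Finset.sum_eq_zero_iff_of_nonneg (fun k _ => hx0 k e)).mp h0 i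
      (Finset.mem_erase.mpr ⟨hij, Finset.mem_univ i⟩)
  -- key decomposition of the integral cost
  have key : ∀ (i : Fin 3) (X : M → Fin 3), (∀ e, e ≠ e1 → e ≠ e2 → x (X e) e = 1) →
      (∑ e, if X e = i then c i e else 0)
        = (∑ e, x i e * c i e)
          + ((if X e1 = i then (1:ℝ) else 0) - x i e1) * c i e1
          + ((if X e2 = i then (1:ℝ) else 0) - x i e2) * c i e2 := by
    intro i X hX
    have hpt : ∀ e, (if X e = i then c i e else 0) - x i e * c i e
        = (if e = e1 then ((if X e1 = i then (1:ℝ) else 0) - x i e1) * c i e1 else 0)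
          + (if e = e2 then ((if X e2 = i then (1:ℝ) else 0) - x i e2) * c i e2 else 0) := by
      intro e
      by_cases he1 : e = e1
      · subst he1
        have : e ≠ e2 := hne
        simp only [this, if_true, if_neg this, if_pos rfl]
        by_cases hXe : X e = i <;> simp [hXe] <;> ring
      · by_cases he2 : e = e2
        · subst he2
          simp only [if_neg he1, if_pos rfl]
          by_cases hXe : X e = i <;> simp [hXe] <;> ring
        · simp only [if_neg he1, if_neg he2, add_zero]
          by_cases hXe : X e = i
          · have hx1' : x i e = 1 := by rw [← hXe]; exact hX e he1 he2
            simp [hXe, hx1']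
          · have hx0' : x i e = 0 :=
              hx_unique e (X e) (hX e he1 he2) i (fun h => hXe h.symm)
            simp [hXe, hx0']
    have hsub : ∑ e, ((if X e = i then c i e else 0) - x i e * c i e)
        = ((if X e1 = i then (1:ℝ) else 0) - x i e1) * c i e1
          + ((if X e2 = i then (1:ℝ) else 0) - x i e2) * c i e2 := by
      rw [Finset.sum_congr rfl (fun e _ => hpt e), Finset.sum_add_distrib]
      simp
    rw [Finset.sum_sub_distrib] at hsub
    linarith
  -- generic bound for one agent
  have main : ∀ (X : M → Fin 3), (∀ e, e ≠ e1 → e ≠ e2 → x (X e) e = 1) →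
      ∀ (i : Fin 3) (b : ℝ),
        ((if X e1 = i then (1:ℝ) else 0) - x i e1) * c i e1
          + ((if X e2 = i then (1:ℝ) else 0) - x i e2) * c i e2 ≤ b →
        0 ≤ b →
        max ((∑ e, if X e = i then c i e else 0) - w i * ∑ e, c i e) 0 ≤ b := by
    intro X hX i b hb hb0
    have hk := key i X hX
    have hW := hWPROP i
    refine max_le ?_ hb0
    rw [hk]
    linarith
  have ha1le : a1 ≤ 1 := ha1 ▸ hc1 1 e1
  have ha2nn : 0 ≤ a2 := ha2 ▸ hc0 1 e2
  have hαnn : 0 ≤ α := by rw [hα]; positivity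
  have ha2eq : a2 = α * a1 := by rw [hα]; field_simp
  have hy1nn : 0 ≤ y1 := hy1 ▸ hx0 1 e1
  have hy2nn : 0 ≤ y2 := hy2 ▸ hx0 1 e2
  have hy1le : y1 ≤ 1 := hy1 ▸ hx1 1 e1
  have hy2le : y2 ≤ 1 := hy2 ▸ hx1 1 e2
  -- substitution equalities
  have hE1 : x 0 e1 = 1 - y1 := by rw [hy1]; linarith
  have hE2 : x 2 e2 = 1 - y2 := by rw [hy2]; linarith
  -- the product bound: a1 * t ≤ max t 0
  have hprod : ∀ t : ℝ, a1 * t ≤ max t 0 := by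
    intro t
    rcases le_or_gt 0 t with h | h
    · exact le_trans (by nlinarith) (le_max_left _ _)
    · exact le_trans (by nlinarith) (le_max_right _ _)
  refine ⟨?_, ?_, ?_, ?_⟩
  -- (i) LL
  · intro X hX hXe1 hXe2
    have b0 : max ((∑ e, if X e = 0 then c 0 e else 0) - w 0 * ∑ e, c 0 e) 0 ≤ y1 := by
      refine main X hX 0 y1 ?_ hy1nn
      simp only [hXe1, hXe2, Fin.reduceEq, reduceIte, hE1, h2c]
      nlinarith [mul_le_of_le_one_right hy1nn (hc1 0 e1)]
    have b1 : max ((∑ e, if X e = 1 then c 1 e else 0) - w 1 * ∑ e, c 1 e) 0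
        ≤ max ((1 - y2) * α - y1) 0 := by
      refine main X hX 1 _ ?_ (le_max_right _ _)
      simp only [hXe1, hXe2, Fin.reduceEq, reduceIte, ← hy1, ← hy2, ← ha1, ← ha2]
      have heq : (0 - y1) * a1 + (1 - y2) * a2 = a1 * ((1 - y2) * α - y1) := by
        rw [ha2eq]; ring
      rw [heq]
      exact hprod _
    have b2 : max ((∑ e, if X e = 2 then c 2 e else 0) - w 2 * ∑ e, c 2 e) 0 ≤ 0 := by
      refine main X hX 2 0 ?_ le_rfl
      simp only [hXe1, hXe2, Fin.reduceEq, reduceIte, h1c, hE2]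
      nlinarith [mul_nonneg (by linarith : (0:ℝ) ≤ 1 - y2) (hc0 2 e2), hc0 2 e1]
    rw [Fin.sum_univ_three]
    linarith
  -- (ii) RR
  · intro X hX hXe1 hXe2
    have b0 : max ((∑ e, if X e = 0 then c 0 e else 0) - w 0 * ∑ e, c 0 e) 0 ≤ 0 := by
      refine main X hX 0 0 ?_ le_rfl
      simp only [hXe1, hXe2, Fin.reduceEq, reduceIte, hE1, h2c]
      nlinarith [mul_nonneg (by linarith : (0:ℝ) ≤ 1 - y1) (hc0 0 e1), hc0 0 e2]
    have b1 : max ((∑ e, if X e = 1 then c 1 e else 0) - w 1 * ∑ e, c 1 e) 0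
        ≤ max ((1 - y1) - y2 * α) 0 := by
      refine main X hX 1 _ ?_ (le_max_right _ _)
      simp only [hXe1, hXe2, Fin.reduceEq, reduceIte, ← hy1, ← hy2, ← ha1, ← ha2]
      have heq : (1 - y1) * a1 + (0 - y2) * a2 = a1 * ((1 - y1) - y2 * α) := by
        rw [ha2eq]; ring
      rw [heq]
      exact hprod _
    have b2 : max ((∑ e, if X e = 2 then c 2 e else 0) - w 2 * ∑ e, c 2 e) 0 ≤ y2 := by
      refine main X hX 2 y2 ?_ hy2nn
      simp only [hXe1, hXe2, Fin.reduceEq, reduceIte, h1c, hE2]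
      nlinarith [mul_le_of_le_one_right hy2nn (hc1 2 e2), hc0 2 e1]
    rw [Fin.sum_univ_three]
    linarith
  -- (iii) LR
  · intro X hX hXe1 hXe2
    have b0 : max ((∑ e, if X e = 0 then c 0 e else 0) - w 0 * ∑ e, c 0 e) 0 ≤ y1 := by
      refine main X hX 0 y1 ?_ hy1nn
      simp only [hXe1, hXe2, Fin.reduceEq, reduceIte, hE1, h2c]
      nlinarith [mul_le_of_le_one_right hy1nn (hc1 0 e1)]
    have b1 : max ((∑ e, if X e = 1 then c 1 e else 0) - w 1 * ∑ e, c 1 e) 0 ≤ 0 := by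
      refine main X hX 1 0 ?_ le_rfl
      simp only [hXe1, hXe2, Fin.reduceEq, reduceIte, ← hy1, ← hy2, ← ha1, ← ha2]
      nlinarith [mul_nonneg hy1nn hpos.le, mul_nonneg hy2nn ha2nn]
    have b2 : max ((∑ e, if X e = 2 then c 2 e else 0) - w 2 * ∑ e, c 2 e) 0 ≤ y2 := by
      refine main X hX 2 y2 ?_ hy2nn
      simp only [hXe1, hXe2, Fin.reduceEq, reduceIte, h1c, hE2]
      nlinarith [mul_le_of_le_one_right hy2nn (hc1 2 e2), hc0 2 e1]
    rw [Fin.sum_univ_three]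
    linarith
  -- (iv) RL
  · intro X hX hXe1 hXe2
    have btar : 0 ≤ (1 - y1) + (1 - y2) * α := by nlinarith
    have b0 : max ((∑ e, if X e = 0 then c 0 e else 0) - w 0 * ∑ e, c 0 e) 0 ≤ 0 := by
      refine main X hX 0 0 ?_ le_rfl
      simp only [hXe1, hXe2, Fin.reduceEq, reduceIte, hE1, h2c]
      nlinarith [mul_nonneg (by linarith : (0:ℝ) ≤ 1 - y1) (hc0 0 e1), hc0 0 e2]
    have b1 : max ((∑ e, if X e = 1 then c 1 e else 0) - w 1 * ∑ e, c 1 e) 0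
        ≤ (1 - y1) + (1 - y2) * α := by
      refine main X hX 1 _ ?_ btar
      simp only [hXe1, hXe2, Fin.reduceEq, reduceIte, ← hy1, ← hy2, ← ha1, ← ha2]
      have heq : (1 - y1) * a1 + (1 - y2) * a2
          = a1 * ((1 - y1) + (1 - y2) * α) := by
        rw [ha2eq]; ring
      rw [heq]
      nlinarith [mul_nonneg (by linarith : (0:ℝ) ≤ 1 - a1) btar]
    have b2 : max ((∑ e, if X e = 2 then c 2 e else 0) - w 2 * ∑ e, c 2 e) 0 ≤ 0 := by
      refine main X hX 2 0 ?_ le_rfl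
      simp only [hXe1, hXe2, Fin.reduceEq, reduceIte, h1c, hE2]
      nlinarith [mul_nonneg (by linarith : (0:ℝ) ≤ 1 - y2) (hc0 2 e2), hc0 2 e1]
    rw [Fin.sum_univ_three]
    linarith
end
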